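/- arXiv:2208.03941 — 11 statements merged into one kernel-verified Lean document; each statement's English description precedes it below -/
import Mathlib

section
/- Let n be a positive integer, H a symmetric n×n real matrix, and λ0, λm, s positive reals with 0 < s ≤ 2/λm, such that (λ0/2)‖v‖² ≤ vᵀHv ≤ λm‖v‖² for all v ∈ ℝⁿ. Let Δ : ℝ → ℝⁿ be twice continuously differentiable and satisfy the heavy-ball residual dynamics Δ''(t) + √(2λ0) Δ'(t) + (1 + √(λ0 s/2)) H Δ(t) = 0 for all t ≥ 0, with Δ'(0) = 0. Then for all t ≥ 0, the loss L(t) := (1/2)‖Δ(t)‖² satisfies L(t) ≤ (6 L̂(0)/λ0) · exp(−(2−√2) √(λ0/2) t), where L̂(0) := (1/2) Δ(0)ᵀ H Δ(0). -/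
/-!
With `a = √(λ₀/2)` and `c = 1 + √(λ₀ s/2)` the residual solves `Δ'' + 2a Δ' + c H Δ = 0`. Along any
solution of this equation (with `H` symmetric) the energy
`E = ½‖Δ' + aΔ‖² + ½(c⟪Δ, HΔ⟫ - a²‖Δ‖²)` satisfies `E' = -2aE` exactly, so `E(t) = E(0) e^{-2at}`.
Since `c⟪Δ, HΔ⟫ ≥ (λ₀/2)‖Δ‖² = a²‖Δ‖²`, this bounds `‖Δ' + aΔ‖` by `√(2E(0)) e^{-at}`, i.e. the
derivative of `e^{at}Δ` by `√(2E(0))`; hence `‖Δ(t)‖ ≤ e^{-at}(‖Δ(0)‖ + √(2E(0)) t)`. As `Δ'(0) = 0`,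
`2E(0) = c⟪Δ(0), HΔ(0)⟫`, where `c ≤ 3` because `λ₀/2 ≤ λₘ` and `s ≤ 2/λₘ`; the polynomial
factor is then absorbed by `e^{√2 a t}`.
-/

open scoped RealInnerProductSpace
open Real Set

theorem eq_mul_exp_of_hasDerivAt_eq_mul {f : ℝ → ℝ} {k : ℝ}
    (hf : ∀ u, 0 ≤ u → HasDerivAt f (k * f u) u) {t : ℝ} (ht : 0 ≤ t) :
    f t = f 0 * exp (k * t) := by
  have hF : ∀ u, 0 ≤ u → HasDerivAt (fun u ↦ exp (-(k * u)) * f u) 0 u := by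
    intro u hu
    have he : HasDerivAt (fun u ↦ exp (-(k * u))) (exp (-(k * u)) * -k) u := by
      simpa using ((hasDerivAt_id u).const_mul k).neg.exp
    exact (he.mul (hf u hu)).congr_deriv (by ring)
  have hconst := constant_of_has_deriv_right_zero
    (fun u hu ↦ (hF u hu.1).continuousAt.continuousWithinAt)
    (fun u hu ↦ (hF u hu.1).hasDerivWithinAt) t (right_mem_Icc.2 ht)
  simp only [mul_zero, neg_zero, exp_zero, one_mul] at hconst
  rw [← hconst, mul_right_comm, ← exp_add, neg_add_cancel, exp_zero, one_mul]

theorem norm_le_exp_neg_mul_of_norm_deriv_add_le {E : Type*} [NormedAddCommGroup E]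
    [NormedSpace ℝ E] {x v : ℝ → E} {a M t : ℝ}
    (hx : ∀ u, 0 ≤ u → HasDerivAt x (v u) u)
    (hw : ∀ u, 0 ≤ u → ‖v u + a • x u‖ ≤ M * exp (-(a * u))) (ht : 0 ≤ t) :
    ‖x t‖ ≤ exp (-(a * t)) * (‖x 0‖ + M * t) := by
  have hg : ∀ u, 0 ≤ u →
      HasDerivAt (fun u ↦ exp (a * u) • x u) (exp (a * u) • (v u + a • x u)) u := by
    intro u hu
    have he : HasDerivAt (fun u ↦ exp (a * u)) (exp (a * u) * a) u := by
      simpa using ((hasDerivAt_id u).const_mul a).exp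
    exact (he.smul (hx u hu)).congr_deriv (by rw [smul_add, smul_smul, add_comm])
  have hB : ∀ u, HasDerivAt (fun u ↦ ‖x 0‖ + M * u) M u := fun u ↦ by
    simpa using ((hasDerivAt_id u).const_mul M).const_add ‖x 0‖
  have hbound := image_norm_le_of_norm_deriv_right_le_deriv_boundary
    (fun u hu ↦ (hg u hu.1).continuousAt.continuousWithinAt)
    (fun u hu ↦ (hg u hu.1).hasDerivWithinAt) (by simp) hB
    (fun u hu ↦ by
      rw [norm_smul, norm_of_nonneg (exp_nonneg _)]
      calc exp (a * u) * ‖v u + a • x u‖ ≤ exp (a * u) * (M * exp (-(a * u))) :=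
            mul_le_mul_of_nonneg_left (hw u hu.1) (exp_nonneg _)
        _ = M := by rw [mul_left_comm, ← exp_add, add_neg_cancel, exp_zero, mul_one])
    (right_mem_Icc.2 ht)
  rw [norm_smul, norm_of_nonneg (exp_nonneg _)] at hbound
  calc ‖x t‖ = exp (-(a * t)) * (exp (a * t) * ‖x t‖) := by
        rw [← mul_assoc, ← exp_add, neg_add_cancel, exp_zero, one_mul]
    _ ≤ exp (-(a * t)) * (‖x 0‖ + M * t) := mul_le_mul_of_nonneg_left hbound (exp_nonneg _)

namespace HeavyBall

variable {E : Type*} [NormedAddCommGroup E] [InnerProductSpace ℝ E]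

noncomputable def energy (T : E →L[ℝ] E) (a c : ℝ) (x v : E) : ℝ :=
  (‖v + a • x‖ ^ 2 + (c * ⟪x, T x⟫ - a ^ 2 * ‖x‖ ^ 2)) / 2

variable {T : E →L[ℝ] E} {a c : ℝ}

theorem two_mul_energy_zero_right (x : E) : 2 * energy T a c x 0 = c * ⟪x, T x⟫ := by
  simp only [energy, zero_add, norm_smul, mul_pow, norm_eq_abs, sq_abs]
  ring

theorem sq_norm_add_smul_le_two_mul_energy {x : E} (hx : a ^ 2 * ‖x‖ ^ 2 ≤ c * ⟪x, T x⟫)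
    (v : E) : ‖v + a • x‖ ^ 2 ≤ 2 * energy T a c x v := by
  unfold energy
  linarith

variable {x v : ℝ → E}

theorem hasDerivAt_energy (hT : (T : E →ₗ[ℝ] E).IsSymmetric) {t : ℝ}
    (hx : HasDerivAt x (v t) t) (hv : HasDerivAt v (-(2 * a) • v t - c • T (x t)) t) :
    HasDerivAt (fun u ↦ energy T a c (x u) (v u)) (-(2 * a) * energy T a c (x t) (v t)) t := by
  have hw : HasDerivAt (fun u ↦ v u + a • x u) (-(2 * a) • v t - c • T (x t) + a • v t) t :=
    hv.add (hx.const_smul a)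
  have hTx : HasDerivAt (fun u ↦ T (x u)) (T (v t)) t := T.hasFDerivAt.comp_hasDerivAt t hx
  have h : HasDerivAt (fun u ↦ energy T a c (x u) (v u))
      ((2 * ⟪v t + a • x t, -(2 * a) • v t - c • T (x t) + a • v t⟫
        + (c * (⟪x t, T (v t)⟫ + ⟪v t, T (x t)⟫) - a ^ 2 * (2 * ⟪x t, v t⟫))) / 2) t :=
    (hw.norm_sq.add (((hx.inner ℝ hTx).const_mul c).sub (hx.norm_sq.const_mul (a ^ 2)))).div_const 2
  refine h.congr_deriv ?_
  have hsymm : ⟪x t, T (v t)⟫ = ⟪v t, T (x t)⟫ :=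
    (hT (x t) (v t)).symm.trans (real_inner_comm _ _)
  simp only [energy, ← real_inner_self_eq_norm_sq, inner_add_left, inner_add_right,
    inner_sub_right, real_inner_smul_left, real_inner_smul_right, hsymm,
    real_inner_comm (x t) (v t), real_inner_comm (T (x t)) (v t)]
  ring

theorem norm_le_of_hasDerivAt (hT : (T : E →ₗ[ℝ] E).IsSymmetric)
    (hcoer : ∀ y, a ^ 2 * ‖y‖ ^ 2 ≤ c * ⟪y, T y⟫)
    (hx : ∀ u, 0 ≤ u → HasDerivAt x (v u) u)
    (hv : ∀ u, 0 ≤ u → HasDerivAt v (-(2 * a) • v u - c • T (x u)) u) {t : ℝ} (ht : 0 ≤ t) :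
    ‖x t‖ ≤ exp (-(a * t)) * (‖x 0‖ + √(2 * energy T a c (x 0) (v 0)) * t) := by
  have hE : ∀ u, 0 ≤ u →
      energy T a c (x u) (v u) = energy T a c (x 0) (v 0) * exp (-(2 * a) * u) :=
    fun u ↦ eq_mul_exp_of_hasDerivAt_eq_mul fun u hu ↦ hasDerivAt_energy hT (hx u hu) (hv u hu)
  refine norm_le_exp_neg_mul_of_norm_deriv_add_le hx (fun u hu ↦ ?_) ht
  calc ‖v u + a • x u‖ ≤ √(2 * energy T a c (x u) (v u)) :=
        le_sqrt_of_sq_le (sq_norm_add_smul_le_two_mul_energy (hcoer (x u)) (v u))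
    _ = √(2 * energy T a c (x 0) (v 0)) * exp (-(a * u)) := by
        rw [hE u hu, ← mul_assoc, show -(2 * a) * u = -(a * u) + -(a * u) by ring, exp_add,
          ← sq, sqrt_mul' _ (sq_nonneg _), sqrt_sq (exp_nonneg _)]

theorem norm_le_of_contDiff (hT : (T : E →ₗ[ℝ] E).IsSymmetric)
    (hcoer : ∀ y, a ^ 2 * ‖y‖ ^ 2 ≤ c * ⟪y, T y⟫) (hx : ContDiff ℝ 2 x)
    (hode : ∀ u, 0 ≤ u → deriv (deriv x) u + (2 * a) • deriv x u + c • T (x u) = 0)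
    {t : ℝ} (ht : 0 ≤ t) :
    ‖x t‖ ≤ exp (-(a * t)) * (‖x 0‖ + √(2 * energy T a c (x 0) (deriv x 0)) * t) := by
  have hx' : Differentiable ℝ (deriv x) :=
    ((contDiff_succ_iff_deriv (n := 1)).1 hx).2.2.differentiable one_ne_zero
  refine norm_le_of_hasDerivAt hT hcoer (fun u _ ↦ (hx.differentiable two_ne_zero u).hasDerivAt)
    (fun u hu ↦ (hx' u).hasDerivAt.congr_deriv ?_) ht
  linear_combination (norm := module) hode u hu

end HeavyBall

theorem le_of_forall_mul_norm_sq_le {F : Type*} [NormedAddCommGroup F] [Nontrivial F]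
    {f : F → ℝ} {α β : ℝ} (hlow : ∀ y, α * ‖y‖ ^ 2 ≤ f y) (hup : ∀ y, f y ≤ β * ‖y‖ ^ 2) :
    α ≤ β := by
  obtain ⟨y, hy⟩ := exists_ne (0 : F)
  exact le_of_mul_le_mul_right ((hlow y).trans (hup y)) (by positivity)

theorem one_add_sqrt_le_three {lam0 lamm s : ℝ} (hlam0 : 0 ≤ lam0) (hlamm : 0 < lamm)
    (hll : lam0 / 2 ≤ lamm) (hs2 : s ≤ 2 / lamm) : 1 + √(lam0 * s / 2) ≤ 3 := by
  have : lam0 * s ≤ 4 := calc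
    lam0 * s ≤ lam0 * (2 / lamm) := mul_le_mul_of_nonneg_left hs2 hlam0
    _ ≤ 4 := by rw [mul_div_assoc', div_le_iff₀ hlamm]; linarith
  linarith [(sqrt_le_left zero_le_two).2 (by linarith : lam0 * s / 2 ≤ 2 ^ 2)]

theorem half_sq_add_le_three_mul_exp {Q p m y : ℝ} (hp : 0 ≤ p) (hm : 0 ≤ m) (hy : 0 ≤ y)
    (hp2 : p ^ 2 ≤ 2 * Q) (hm2 : m ^ 2 ≤ 3 * Q * y ^ 2) :
    (p + m) ^ 2 / 2 ≤ 3 * Q * exp y := by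
  have hQ : 0 ≤ Q := by nlinarith
  have hpm : p * m ≤ 3 * Q * y := by
    refine (pow_le_pow_iff_left₀ (by positivity) (by positivity) two_ne_zero).1 ?_
    nlinarith [mul_le_mul hp2 hm2 (sq_nonneg m) (by positivity), sq_nonneg (Q * y)]
  calc (p + m) ^ 2 / 2 ≤ 3 * Q * (1 + y + y ^ 2 / 2) := by nlinarith
    _ ≤ 3 * Q * exp y := mul_le_mul_of_nonneg_left (quadratic_le_exp_of_nonneg hy) (by positivity)

theorem half_sq_le_of_le_exp_neg_mul {X p q lam c t : ℝ} (hlam : 0 < lam) (hc : 0 ≤ c)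
    (hc3 : c ≤ 3) (hp : 0 ≤ p) (hpq : lam / 2 * p ^ 2 ≤ q) (ht : 0 ≤ t) (hX : 0 ≤ X)
    (hXle : X ≤ exp (-(√(lam / 2) * t)) * (p + √(c * q) * t)) :
    1 / 2 * X ^ 2 ≤ 6 * (1 / 2 * q) / lam * exp (-(2 - √2) * √(lam / 2) * t) := by
  set a := √(lam / 2)
  have ha2 : a ^ 2 = lam / 2 := sq_sqrt (by positivity)
  have hq : 0 ≤ q := (by positivity : 0 ≤ lam / 2 * p ^ 2).trans hpq
  have hp2 : p ^ 2 ≤ 2 * (q / lam) := by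
    rw [mul_div_assoc', le_div_iff₀ hlam]; linarith
  have hm2 : (√(c * q) * t) ^ 2 ≤ 3 * (q / lam) * (√2 * a * t) ^ 2 := by
    rw [mul_pow, mul_pow, mul_pow, sq_sqrt (by positivity), sq_sqrt zero_le_two, ha2]
    field_simp
    nlinarith [mul_le_mul_of_nonneg_right hc3 (mul_nonneg hq (sq_nonneg t))]
  calc 1 / 2 * X ^ 2 ≤ exp (-(a * t)) ^ 2 * ((p + √(c * q) * t) ^ 2 / 2) := by
        have := pow_le_pow_left₀ hX hXle 2
        rw [mul_pow] at this
        linarith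
    _ ≤ exp (-(a * t)) ^ 2 * (3 * (q / lam) * exp (√2 * a * t)) := by
        gcongr
        exact half_sq_add_le_three_mul_exp hp (by positivity) (by positivity) hp2 hm2
    _ = 6 * (1 / 2 * q) / lam * exp (-(2 - √2) * a * t) := by
        rw [show -(2 - √2) * a * t = -(a * t) + -(a * t) + √2 * a * t by ring, exp_add, exp_add]
        ring

theorem hb_loss_convergence_general
    (n : ℕ) (hn : 0 < n) (H : Matrix (Fin n) (Fin n) ℝ) (hHsymm : H.IsSymm)
    (lam0 lamm s : ℝ) (hlam0 : 0 < lam0) (hlamm : 0 < lamm)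
    (hs2 : s ≤ 2 / lamm)
    (hlow : ∀ v : EuclideanSpace ℝ (Fin n),
      lam0 / 2 * ‖v‖ ^ 2 ≤ ⟪v, Matrix.toEuclideanLin H v⟫)
    (hup : ∀ v : EuclideanSpace ℝ (Fin n),
      ⟪v, Matrix.toEuclideanLin H v⟫ ≤ lamm * ‖v‖ ^ 2)
    (Δ : ℝ → EuclideanSpace ℝ (Fin n)) (hΔ : ContDiff ℝ 2 Δ)
    (hode : ∀ t : ℝ, 0 ≤ t →
      deriv (deriv Δ) t + Real.sqrt (2 * lam0) • deriv Δ t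
        + (1 + Real.sqrt (lam0 * s / 2)) • Matrix.toEuclideanLin H (Δ t) = 0)
    (hinit : deriv Δ 0 = 0) :
    ∀ t : ℝ, 0 ≤ t →
      (1 / 2) * ‖Δ t‖ ^ 2 ≤
        6 * ((1 / 2) * ⟪Δ 0, Matrix.toEuclideanLin H (Δ 0)⟫) / lam0 *
          Real.exp (-(2 - Real.sqrt 2) * Real.sqrt (lam0 / 2) * t) := by
  intro t ht
  have : NeZero n := ⟨hn.ne'⟩
  set a := √(lam0 / 2)
  set c := 1 + √(lam0 * s / 2)
  set T := Matrix.toEuclideanCLM (𝕜 := ℝ) H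
  have hlowT : ∀ y, lam0 / 2 * ‖y‖ ^ 2 ≤ ⟪y, T y⟫ := hlow
  have hc1 : 1 ≤ c := le_add_of_nonneg_right (sqrt_nonneg _)
  have hc3 : c ≤ 3 :=
    one_add_sqrt_le_three hlam0.le hlamm (le_of_forall_mul_norm_sq_le hlow hup) hs2
  have hT : (T : EuclideanSpace ℝ (Fin n) →ₗ[ℝ] EuclideanSpace ℝ (Fin n)).IsSymmetric :=
    Matrix.isSymmetric_toEuclideanLin_iff.2 (Matrix.isHermitian_iff_isSymm.2 hHsymm)
  have hcoer : ∀ y, a ^ 2 * ‖y‖ ^ 2 ≤ c * ⟪y, T y⟫ := fun y ↦ by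
    rw [sq_sqrt (by positivity)]
    exact (hlowT y).trans (le_mul_of_one_le_left (le_trans (by positivity) (hlowT y)) hc1)
  have h2a : √(2 * lam0) = 2 * a := by
    rw [show 2 * lam0 = 2 ^ 2 * (lam0 / 2) by ring, sqrt_mul (by positivity), sqrt_sq zero_le_two]
  have key := HeavyBall.norm_le_of_contDiff hT hcoer hΔ (fun u hu ↦ h2a ▸ hode u hu) ht
  rw [hinit, HeavyBall.two_mul_energy_zero_right] at key
  exact half_sq_le_of_le_exp_neg_mul hlam0 (by linarith) hc3 (norm_nonneg _) (hlowT (Δ 0)) ht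
    (norm_nonneg _) key

theorem hb_loss_convergence
    (n : ℕ) (hn : 0 < n) (H : Matrix (Fin n) (Fin n) ℝ) (hHsymm : H.IsSymm)
    (lam0 lamm s : ℝ) (hlam0 : 0 < lam0) (hlamm : 0 < lamm)
    (hs : 0 < s) (hs2 : s ≤ 2 / lamm)
    (hlow : ∀ v : EuclideanSpace ℝ (Fin n),
      lam0 / 2 * ‖v‖ ^ 2 ≤ ⟪v, Matrix.toEuclideanLin H v⟫)
    (hup : ∀ v : EuclideanSpace ℝ (Fin n),
      ⟪v, Matrix.toEuclideanLin H v⟫ ≤ lamm * ‖v‖ ^ 2)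
    (Δ : ℝ → EuclideanSpace ℝ (Fin n)) (hΔ : ContDiff ℝ 2 Δ)
    (hode : ∀ t : ℝ, 0 ≤ t →
      deriv (deriv Δ) t + Real.sqrt (2 * lam0) • deriv Δ t
        + (1 + Real.sqrt (lam0 * s / 2)) • Matrix.toEuclideanLin H (Δ t) = 0)
    (hinit : deriv Δ 0 = 0) :
    ∀ t : ℝ, 0 ≤ t →
      (1 / 2) * ‖Δ t‖ ^ 2 ≤
        6 * ((1 / 2) * ⟪Δ 0, Matrix.toEuclideanLin H (Δ 0)⟫) / lam0 *
          Real.exp (-(2 - Real.sqrt 2) * Real.sqrt (lam0 / 2) * t) :=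
  hb_loss_convergence_general n hn H hHsymm lam0 lamm s hlam0 hlamm hs2 hlow hup Δ hΔ hode hinit
end

section
/- Let n be a positive integer, H a symmetric n×n real matrix, and λ0, λm, s positive reals with 0 < s ≤ 2/λm, such that (λ0/2)‖v‖² ≤ vᵀHv ≤ λm‖v‖² for all v ∈ ℝⁿ. Let Δ : ℝ → ℝⁿ be twice continuously differentiable and satisfy Δ''(t) + √(2λ0) Δ'(t) + (1 + √(λ0 s/2)) H Δ(t) = 0 for all t ≥ 0. Define the Lyapunov function V(t) := (1 + √(λ0 s/2)) L̂(t) + (1/4)‖Δ'(t)‖² + (1/4)‖Δ'(t) + √(2λ0) Δ(t)‖², where L̂(t) := (1/2) Δ(t)ᵀ H Δ(t). Then for all t ≥ 0, V(t) ≤ exp(−(2−√2) √(λ0/2) t) · V(0). -/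
/-!
Along a trajectory, `V' = -(a/2)‖Δ'‖² - (aμ/2) ΔᵀHΔ` with `a = √(2λ₀)` and `μ = 1 + √(λ₀s/2)`.
Using `ΔᵀHΔ ≥ (a²/4)‖Δ‖²`, `μ ≥ 1` and Cauchy–Schwarz, `V' + c V ≤ 0` reduces to the
nonnegativity of a quadratic form in `(‖Δ'‖, ‖Δ‖)`, which holds exactly up to the rate
`c = (2 - √2) a / 2`; Grönwall's inequality finishes.
-/

open scoped RealInnerProductSpace

open Real Set in
theorem le_mul_exp_of_hasDerivAt_le_mul {f f' : ℝ → ℝ} {K a : ℝ}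
    (hf : ∀ x ∈ Ici a, HasDerivAt f (f' x) x) (bound : ∀ x ∈ Ici a, f' x ≤ K * f x)
    {b : ℝ} (hb : a ≤ b) : f b ≤ f a * exp (K * (b - a)) := by
  rw [← gronwallBound_ε0]
  refine le_gronwallBound_of_liminf_deriv_right_le (f' := f') (b := b) ?_ ?_ le_rfl ?_ b
    ⟨hb, le_rfl⟩
  · exact fun x hx => (hf x hx.1).continuousAt.continuousWithinAt
  · exact fun x hx _ hr => (hf x hx.1).hasDerivWithinAt.liminf_right_slope_le hr
  · simpa using fun x hx _ => bound x hx

section Lyapunov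

variable {E : Type*} [NormedAddCommGroup E] [InnerProductSpace ℝ E]

noncomputable def hbLyapunov (T : E →ₗ[ℝ] E) (a μ : ℝ) (x v : E) : ℝ :=
  μ * ((1 / 2) * ⟪x, T x⟫) + (1 / 4) * ‖v‖ ^ 2 + (1 / 4) * ‖v + a • x‖ ^ 2

theorem hasDerivAt_hbLyapunov [FiniteDimensional ℝ E] {T : E →ₗ[ℝ] E} (hT : T.IsSymmetric)
    {a μ t : ℝ} {x v : ℝ → E} {w : E} (hx : HasDerivAt x (v t) t) (hv : HasDerivAt v w t)
    (hode : w + a • v t + μ • T (x t) = 0) :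
    HasDerivAt (fun s => hbLyapunov T a μ (x s) (v s))
      (-(a / 2 * ‖v t‖ ^ 2 + a * μ / 2 * ⟪x t, T (x t)⟫)) t := by
  have hTx : HasDerivAt (fun s => T (x s)) (T (v t)) t :=
    (LinearMap.toContinuousLinearMap T).hasFDerivAt.comp_hasDerivAt t hx
  have hw : w = -(a • v t) - μ • T (x t) := by
    rw [← sub_eq_zero, ← hode]; abel
  have hderiv := ((((hx.inner ℝ hTx).const_mul (1 / 2)).const_mul μ).add
    (hv.norm_sq.const_mul (1 / 4))).add ((hv.add (hx.const_smul a)).norm_sq.const_mul (1 / 4))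
  refine hderiv.congr_deriv ?_
  rw [hw, ← real_inner_self_eq_norm_sq, ← hT]
  simp only [Pi.add_apply, Pi.smul_apply, inner_sub_right, inner_add_left, inner_add_right,
    inner_neg_right, real_inner_smul_left, real_inner_smul_right,
    real_inner_comm (T (x t)) (v t)]
  ring

theorem hbLyapunov_dissipation {T : E →ₗ[ℝ] E} {a μ : ℝ} (ha : 0 < a) (hμ : 1 ≤ μ) {x v : E}
    (hx : a ^ 2 / 4 * ‖x‖ ^ 2 ≤ ⟪x, T x⟫) :
    (2 - √2) / 2 * a * hbLyapunov T a μ x v ≤ a / 2 * ‖v‖ ^ 2 + a * μ / 2 * ⟪x, T x⟫ := by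
  set c := (2 - √2) / 2 * a with hc
  have hsqrt2 : √2 ^ 2 = 2 := Real.sq_sqrt zero_le_two
  have hc_nonneg : 0 ≤ c := by nlinarith [Real.sqrt_nonneg 2]
  have hc_lt : c < a := by nlinarith [Real.one_lt_sqrt_two]
  -- `c` is the smaller root of `2 c² - 4 a c + a² = 0`; this makes the quadratic form a square.
  have hroot : 2 * c ^ 2 - 4 * a * c + a ^ 2 = 0 := by
    rw [hc]; linear_combination a ^ 2 / 2 * hsqrt2
  have hform : c * a / 2 * (‖v‖ * ‖x‖) ≤
      (a - c) / 2 * ‖v‖ ^ 2 + (a - 3 * c) * a ^ 2 / 8 * ‖x‖ ^ 2 := by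
    have hsq : 2 * (a - c) * ((a - c) / 2 * ‖v‖ ^ 2 + (a - 3 * c) * a ^ 2 / 8 * ‖x‖ ^ 2
        - c * a / 2 * (‖v‖ * ‖x‖)) = ((a - c) * ‖v‖ - c * a / 2 * ‖x‖) ^ 2 := by
      linear_combination a ^ 2 * ‖x‖ ^ 2 / 4 * hroot
    nlinarith [sq_nonneg ((a - c) * ‖v‖ - c * a / 2 * ‖x‖)]
  have hcs : c * a / 2 * ⟪v, x⟫ ≤ c * a / 2 * (‖v‖ * ‖x‖) :=
    mul_le_mul_of_nonneg_left (real_inner_le_norm v x) (by positivity)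
  have hexpand : ‖v + a • x‖ ^ 2 = ‖v‖ ^ 2 + 2 * a * ⟪v, x⟫ + a ^ 2 * ‖x‖ ^ 2 := by
    rw [norm_add_sq_real, real_inner_smul_right, norm_smul, Real.norm_of_nonneg ha.le]; ring
  have hP : 0 ≤ (a - c) / 2 * ((μ - 1) * ⟪x, T x⟫ + (⟪x, T x⟫ - a ^ 2 / 4 * ‖x‖ ^ 2)) := by
    have hTx : 0 ≤ ⟪x, T x⟫ := le_trans (by positivity) hx
    have hμTx : 0 ≤ (μ - 1) * ⟪x, T x⟫ := mul_nonneg (by linarith) hTx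
    exact mul_nonneg (by linarith) (by linarith)
  rw [hbLyapunov, hexpand]
  linarith

end Lyapunov

theorem hb_lyapunov_decay_general
    (n : ℕ) (H : Matrix (Fin n) (Fin n) ℝ) (hHsymm : H.IsSymm)
    (lam0 s : ℝ) (hlam0 : 0 < lam0)
    (hlow : ∀ v : EuclideanSpace ℝ (Fin n),
      lam0 / 2 * ‖v‖ ^ 2 ≤ ⟪v, Matrix.toEuclideanLin H v⟫)
    (Δ : ℝ → EuclideanSpace ℝ (Fin n)) (hΔ : ContDiff ℝ 2 Δ)
    (hode : ∀ t : ℝ, 0 ≤ t →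
      deriv (deriv Δ) t + Real.sqrt (2 * lam0) • deriv Δ t
        + (1 + Real.sqrt (lam0 * s / 2)) • Matrix.toEuclideanLin H (Δ t) = 0)
    (V : ℝ → ℝ)
    (hV : ∀ t : ℝ, V t =
      (1 + Real.sqrt (lam0 * s / 2)) * ((1 / 2) * ⟪Δ t, Matrix.toEuclideanLin H (Δ t)⟫)
        + (1 / 4) * ‖deriv Δ t‖ ^ 2
        + (1 / 4) * ‖deriv Δ t + Real.sqrt (2 * lam0) • Δ t‖ ^ 2) :
    ∀ t : ℝ, 0 ≤ t →
      V t ≤ Real.exp (-(2 - Real.sqrt 2) * Real.sqrt (lam0 / 2) * t) * V 0 := by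
  set a := √(2 * lam0)
  set μ := 1 + √(lam0 * s / 2)
  have ha : 0 < a := by positivity
  have ha_sq : a ^ 2 / 4 = lam0 / 2 := by rw [Real.sq_sqrt (by positivity)]; ring
  have hrate : -(2 - √2) * √(lam0 / 2) = -((2 - √2) / 2 * a) := by
    rw [← ha_sq, Real.sqrt_div' _ zero_le_four, Real.sqrt_sq ha.le, show √4 = 2 by norm_num]; ring
  have hT : (Matrix.toEuclideanLin H).IsSymmetric :=
    Matrix.isSymmetric_toEuclideanLin_iff.mpr (H.conjTranspose_eq_transpose_of_trivial.trans hHsymm)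
  have hμ : 1 ≤ μ := le_add_of_nonneg_right (Real.sqrt_nonneg _)
  have hΔ' : ∀ t, HasDerivAt Δ (deriv Δ t) t :=
    fun t => (hΔ.differentiable two_ne_zero t).hasDerivAt
  have hΔ'' : ∀ t, HasDerivAt (deriv Δ) (deriv (deriv Δ) t) t :=
    fun t => (hΔ.deriv'.differentiable one_ne_zero t).hasDerivAt
  obtain rfl : V = fun t => hbLyapunov (Matrix.toEuclideanLin H) a μ (Δ t) (deriv Δ t) :=
    funext hV
  intro t ht
  rw [hrate, mul_comm]
  refine (le_mul_exp_of_hasDerivAt_le_mul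
    (f' := fun t => -(a / 2 * ‖deriv Δ t‖ ^ 2 + a * μ / 2 * ⟪Δ t, Matrix.toEuclideanLin H (Δ t)⟫))
    (fun t ht => hasDerivAt_hbLyapunov hT (hΔ' t) (hΔ'' t) (hode t ht))
    (fun t _ => ?_) ht).trans_eq (by rw [sub_zero])
  have := hbLyapunov_dissipation (x := Δ t) (v := deriv Δ t) ha hμ (ha_sq ▸ hlow (Δ t))
  linarith

theorem hb_lyapunov_decay
    (n : ℕ) (hn : 0 < n) (H : Matrix (Fin n) (Fin n) ℝ) (hHsymm : H.IsSymm)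
    (lam0 lamm s : ℝ) (hlam0 : 0 < lam0) (hlamm : 0 < lamm)
    (hs : 0 < s) (hs2 : s ≤ 2 / lamm)
    (hlow : ∀ v : EuclideanSpace ℝ (Fin n),
      lam0 / 2 * ‖v‖ ^ 2 ≤ ⟪v, Matrix.toEuclideanLin H v⟫)
    (hup : ∀ v : EuclideanSpace ℝ (Fin n),
      ⟪v, Matrix.toEuclideanLin H v⟫ ≤ lamm * ‖v‖ ^ 2)
    (Δ : ℝ → EuclideanSpace ℝ (Fin n)) (hΔ : ContDiff ℝ 2 Δ)
    (hode : ∀ t : ℝ, 0 ≤ t →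
      deriv (deriv Δ) t + Real.sqrt (2 * lam0) • deriv Δ t
        + (1 + Real.sqrt (lam0 * s / 2)) • Matrix.toEuclideanLin H (Δ t) = 0)
    (V : ℝ → ℝ)
    (hV : ∀ t : ℝ, V t =
      (1 + Real.sqrt (lam0 * s / 2)) * ((1 / 2) * ⟪Δ t, Matrix.toEuclideanLin H (Δ t)⟫)
        + (1 / 4) * ‖deriv Δ t‖ ^ 2
        + (1 / 4) * ‖deriv Δ t + Real.sqrt (2 * lam0) • Δ t‖ ^ 2) :
    ∀ t : ℝ, 0 ≤ t →
      V t ≤ Real.exp (-(2 - Real.sqrt 2) * Real.sqrt (lam0 / 2) * t) * V 0 :=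
  hb_lyapunov_decay_general n H hHsymm lam0 s hlam0 hlow Δ hΔ hode V hV
end

section
/- Let n be a positive integer, H a symmetric n×n real matrix, and λ0, s positive reals. Let Δ : ℝ → ℝⁿ be twice continuously differentiable and satisfy Δ''(t) + √(2λ0) Δ'(t) + (1 + √(λ0 s/2)) H Δ(t) = 0 for all t. Define V(t) := (1 + √(λ0 s/2)) L̂(t) + (1/4)‖Δ'(t)‖² + (1/4)‖Δ'(t) + √(2λ0) Δ(t)‖², where L̂(t) := (1/2) Δ(t)ᵀ H Δ(t). Then for all t, V is differentiable with V'(t) = −√(λ0/2) · ( ‖Δ'(t)‖² + (1 + √(λ0 s/2)) · Δ(t)ᵀ H Δ(t) ). -/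
/-!
Along a trajectory of `x'' + a x' + c T x = 0` with `T` self-adjoint, differentiating the three
terms of the Lyapunov function produces `c ⟪x', T x⟫`, `-(a/2) ‖x'‖² - (c/2) ⟪x', T x⟫` and (since
`x'' + a x' = -c T x`) `-(c/2) ⟪x', T x⟫ - (a c/2) ⟪x, T x⟫`; the cross terms cancel. For the
heavy-ball ODE `a = √(2λ₀) = 2 √(λ₀/2)`.
-/

open scoped RealInnerProductSpace

variable {E : Type*} [NormedAddCommGroup E] [InnerProductSpace ℝ E]

noncomputable def heavyBallLyapunov (T : E →L[ℝ] E) (a c : ℝ) (x v : E) : ℝ :=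
  c * ((1 / 2) * ⟪x, T x⟫) + (1 / 4) * ‖v‖ ^ 2 + (1 / 4) * ‖v + a • x‖ ^ 2

theorem HasDerivAt.inner_apply_self_of_isSymmetric {T : E →L[ℝ] E}
    (hT : (T : E →ₗ[ℝ] E).IsSymmetric) {x : ℝ → E} {v : E} {t : ℝ} (hx : HasDerivAt x v t) :
    HasDerivAt (fun τ => ⟪x τ, T (x τ)⟫) (2 * ⟪v, T (x t)⟫) t := by
  refine (hx.inner ℝ (T.hasFDerivAt.comp_hasDerivAt t hx)).congr_deriv ?_
  have hsymm : ⟪x t, T v⟫ = ⟪v, T (x t)⟫ := by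
    rw [real_inner_comm]; exact hT v (x t)
  rw [hsymm, Function.comp_apply]
  ring

theorem hasDerivAt_heavyBallLyapunov {T : E →L[ℝ] E} (hT : (T : E →ₗ[ℝ] E).IsSymmetric)
    {a c : ℝ} {x v : ℝ → E} {w : E} {t : ℝ} (hx : HasDerivAt x (v t) t) (hv : HasDerivAt v w t)
    (hode : w + a • v t + c • T (x t) = 0) :
    HasDerivAt (fun τ => heavyBallLyapunov T a c (x τ) (v τ))
      (-(a / 2) * (‖v t‖ ^ 2 + c * ⟪x t, T (x t)⟫)) t := by
  have hw : w = -(a • v t) - c • T (x t) := by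
    rw [← sub_eq_zero, ← hode]; abel
  have hdamped : w + a • v t = -(c • T (x t)) := by rw [hw]; abel
  refine ((((hx.inner_apply_self_of_isSymmetric hT).const_mul (1 / 2)).const_mul c).add
    (hv.norm_sq.const_mul (1 / 4))).add
    ((hv.add (hx.const_smul a)).norm_sq.const_mul (1 / 4)) |>.congr_deriv ?_
  rw [hdamped, hw]
  simp only [Pi.add_apply, Pi.smul_apply, inner_add_left, inner_neg_right, inner_sub_right,
    inner_smul_left, inner_smul_right, real_inner_self_eq_norm_sq, real_inner_comm (T (x t)) (x t),
    RCLike.conj_to_real]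
  ring

theorem Real.sqrt_two_mul_eq_two_mul_sqrt_half (r : ℝ) :
    √(2 * r) = 2 * √(r / 2) := by
  rw [show 2 * r = 2 ^ 2 * (r / 2) by ring, Real.sqrt_mul (by positivity), Real.sqrt_sq zero_le_two]

theorem hb_lyapunov_derivative_general
    (n : ℕ) (H : Matrix (Fin n) (Fin n) ℝ) (hHsymm : H.IsSymm)
    (lam0 s : ℝ)
    (Δ : ℝ → EuclideanSpace ℝ (Fin n)) (hΔ : ContDiff ℝ 2 Δ)
    (hode : ∀ t : ℝ,
      deriv (deriv Δ) t + Real.sqrt (2 * lam0) • deriv Δ t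
        + (1 + Real.sqrt (lam0 * s / 2)) • Matrix.toEuclideanLin H (Δ t) = 0) :
    ∀ t : ℝ,
      HasDerivAt (fun τ : ℝ =>
        (1 + Real.sqrt (lam0 * s / 2)) * ((1 / 2) * ⟪Δ τ, Matrix.toEuclideanLin H (Δ τ)⟫)
          + (1 / 4) * ‖deriv Δ τ‖ ^ 2
          + (1 / 4) * ‖deriv Δ τ + Real.sqrt (2 * lam0) • Δ τ‖ ^ 2)
        (-(Real.sqrt (lam0 / 2)) *
          (‖deriv Δ t‖ ^ 2
            + (1 + Real.sqrt (lam0 * s / 2)) * ⟪Δ t, Matrix.toEuclideanLin H (Δ t)⟫))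
        t := by
  intro t
  have hT : (Matrix.toEuclideanLin H).IsSymmetric :=
    Matrix.isSymmetric_toEuclideanLin_iff.mpr (Matrix.isHermitian_iff_isSymm.mpr hHsymm)
  have hΔ' : ContDiff ℝ 1 (deriv Δ) := (contDiff_succ_iff_deriv (n := 1).mp hΔ).2.2
  have hV := hasDerivAt_heavyBallLyapunov (T := (Matrix.toEuclideanLin H).toContinuousLinearMap)
    hT ((hΔ.differentiable two_ne_zero t).hasDerivAt)
    ((hΔ'.differentiable one_ne_zero t).hasDerivAt) (hode t)
  have ha : √(2 * lam0) / 2 = √(lam0 / 2) := by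
    rw [Real.sqrt_two_mul_eq_two_mul_sqrt_half, mul_div_cancel_left₀ _ two_ne_zero]
  rw [← ha]
  exact hV

theorem hb_lyapunov_derivative
    (n : ℕ) (hn : 0 < n) (H : Matrix (Fin n) (Fin n) ℝ) (hHsymm : H.IsSymm)
    (lam0 s : ℝ) (hlam0 : 0 < lam0) (hs : 0 < s)
    (Δ : ℝ → EuclideanSpace ℝ (Fin n)) (hΔ : ContDiff ℝ 2 Δ)
    (hode : ∀ t : ℝ,
      deriv (deriv Δ) t + Real.sqrt (2 * lam0) • deriv Δ t
        + (1 + Real.sqrt (lam0 * s / 2)) • Matrix.toEuclideanLin H (Δ t) = 0) :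
    ∀ t : ℝ,
      HasDerivAt (fun τ : ℝ =>
        (1 + Real.sqrt (lam0 * s / 2)) * ((1 / 2) * ⟪Δ τ, Matrix.toEuclideanLin H (Δ τ)⟫)
          + (1 / 4) * ‖deriv Δ τ‖ ^ 2
          + (1 / 4) * ‖deriv Δ τ + Real.sqrt (2 * lam0) • Δ τ‖ ^ 2)
        (-(Real.sqrt (lam0 / 2)) *
          (‖deriv Δ t‖ ^ 2
            + (1 + Real.sqrt (lam0 * s / 2)) * ⟪Δ t, Matrix.toEuclideanLin H (Δ t)⟫))
        t :=
  hb_lyapunov_derivative_general n H hHsymm lam0 s Δ hΔ hode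
end

section
/- The supremum over all real φ > 0 and all z with 0 ≤ z ≤ 1 of the quantity min{ 2z, 4/(2 + 1/φ), (1−z)/(1+φ) } equals 2 − √2. -/
/-!
Write `r` for the minimum. Adding `r ≤ 2z` to `r (1 + φ) ≤ 1 - z` eliminates `z` and gives
`2 r φ ≤ 2 - 3r`, while `r ≤ 4 / (2 + 1/φ)` reads `r ≤ 2φ (2 - r)`. Multiplying the two
eliminates `φ`: `r² ≤ (2 - 3r)(2 - r)`, i.e. `r² - 4r + 2 ≥ 0`, so `r ≤ 2 - √2` because `r < 2`.
All three constraints are tight at `φ = (√2 - 1)/2`, `z = 1 - √2/2`, where the minimum is `2 - √2`.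
-/

open Real

noncomputable def hbRate (φ z : ℝ) : ℝ :=
  min (2 * z) (min (4 / (2 + 1 / φ)) ((1 - z) / (1 + φ)))

lemma le_two_sub_sqrt_two {r : ℝ} (hr : r < 2) (h : 0 ≤ r ^ 2 - 4 * r + 2) : r ≤ 2 - √2 := by
  have : √2 ≤ 2 - r := (sqrt_le_left (by linarith)).2 (by nlinarith)
  linarith

lemma hbRate_le {φ : ℝ} (hφ : 0 < φ) (z : ℝ) : hbRate φ z ≤ 2 - √2 := by
  set r := hbRate φ z
  have h₁ : r ≤ 2 * z := min_le_left _ _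
  have h₂ : r ≤ 4 / (2 + 1 / φ) := (min_le_right _ _).trans (min_le_left _ _)
  have h₃ : r ≤ (1 - z) / (1 + φ) := (min_le_right _ _).trans (min_le_right _ _)
  rw [show 4 / (2 + 1 / φ) = 4 * φ / (2 * φ + 1) by field_simp,
    le_div_iff₀ (by positivity)] at h₂
  rw [le_div_iff₀ (by positivity)] at h₃
  have h₁₃ : 2 * r * φ ≤ 2 - 3 * r := by linarith
  have hr2 : r < 2 := by nlinarith
  refine le_two_sub_sqrt_two hr2 ?_
  rcases le_or_gt r 0 with hr | hr
  · nlinarith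
  · nlinarith [mul_le_mul_of_nonneg_right h₁₃ (sub_nonneg.2 hr2.le)]

lemma hbRate_optimum : hbRate ((√2 - 1) / 2) (1 - √2 / 2) = 2 - √2 := by
  have hs : √2 ^ 2 = 2 := sq_sqrt zero_le_two
  have hs1 : 0 < √2 - 1 := sub_pos.2 one_lt_sqrt_two
  have h₁ : 2 * (1 - √2 / 2) = 2 - √2 := by ring
  have h₂ : 4 / (2 + 1 / ((√2 - 1) / 2)) = 2 - √2 := by
    rw [div_eq_iff (by positivity)]
    field_simp
    nlinarith
  have h₃ : (1 - (1 - √2 / 2)) / (1 + (√2 - 1) / 2) = 2 - √2 := by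
    rw [div_eq_iff (by positivity)]
    nlinarith
  rw [hbRate, h₁, h₂, h₃, min_self, min_self]

theorem hb_rate_optimization :
    sSup {x : ℝ | ∃ φ z : ℝ, 0 < φ ∧ 0 ≤ z ∧ z ≤ 1 ∧
        x = min (2 * z) (min (4 / (2 + 1 / φ)) ((1 - z) / (1 + φ)))} =
      2 - Real.sqrt 2 := by
  have hs2 : √2 ≤ 2 := (sqrt_le_left zero_le_two).2 (by norm_num)
  refine IsGreatest.csSup_eq ⟨?_, ?_⟩
  · exact ⟨(√2 - 1) / 2, 1 - √2 / 2, by linarith [one_lt_sqrt_two], by linarith,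
      by linarith [sqrt_nonneg 2], hbRate_optimum.symm⟩
  · rintro _ ⟨φ, z, hφ, -, -, rfl⟩
    exact hbRate_le hφ z
end

section
/- For every real α with 0 < α ≤ 1/2, the supremum over all real φ > 0 of min{ 2/(3 + 2φ), 4(1 + α)/(2 + 1/φ), 4/(1 + φ) } equals (1/2) · (4 + 3α − √(8 + 16α + 9α²)). -/
/-!
In `φ > 0` the first rate `2 / (3 + 2φ)` decreases and the second `4(1 + α) / (2 + 1/φ)`
increases, so the minimum of the three rates never exceeds their common value at the crossing
point `φ₀`. Clearing denominators, both rates equal `1 - 2(1 + α)φ` exactly when `φ` is a root of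
`4(1 + α)φ² + (4 + 6α)φ = 1`; at the positive root this value is `ρ*_NAG(α)`, and it lies below
the third rate because `φ₀ ≤ 1/4`.
-/

open Set

theorem isGreatest_min_of_antitoneOn_of_monotoneOn {ι β : Type*} [LinearOrder ι] [LinearOrder β]
    {s : Set ι} {f g h : ι → β} {i₀ : ι} {b : β} (hf : AntitoneOn f s) (hg : MonotoneOn g s)
    (hi₀ : i₀ ∈ s) (hfi₀ : f i₀ = b) (hgi₀ : g i₀ = b) (hhi₀ : b ≤ h i₀) :
    IsGreatest {x | ∃ i ∈ s, x = min (f i) (min (g i) (h i))} b := by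
  refine ⟨⟨i₀, hi₀, by rw [hfi₀, hgi₀, min_eq_left hhi₀, min_self]⟩, ?_⟩
  rintro x ⟨i, hi, rfl⟩
  rcases le_total i i₀ with hle | hle
  · exact (min_le_right _ _).trans <| (min_le_left _ _).trans <| hgi₀ ▸ hg hi hi₀ hle
  · exact (min_le_left _ _).trans <| hfi₀ ▸ hf hi₀ hi hle

namespace NAG

/-- The positive root of `4 (1 + α) φ ^ 2 + (4 + 6 α) φ = 1` when `s = √(8 + 16 α + 9 α ^ 2)`. -/
noncomputable def crossing (α s : ℝ) : ℝ := (s - (2 + 3 * α)) / (4 * (1 + α))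

variable {α s φ : ℝ}

theorem antitoneOn_rate₁ : AntitoneOn (fun φ : ℝ => 2 / (3 + 2 * φ)) (Ioi 0) :=
  fun φ hφ _ _ hle =>
    div_le_div_of_nonneg_left zero_le_two (by linarith [mem_Ioi.mp hφ]) (by linarith)

theorem monotoneOn_rate₂ (hα : -1 ≤ α) :
    MonotoneOn (fun φ : ℝ => 4 * (1 + α) / (2 + 1 / φ)) (Ioi 0) := fun φ hφ ψ hψ hle =>
  div_le_div_of_nonneg_left (by linarith) (by have := mem_Ioi.mp hψ; positivity)
    (add_le_add_right (one_div_le_one_div_of_le hφ hle) 2)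

theorem rate₁_eq (hφ : 0 < φ) (hq : 4 * (1 + α) * φ ^ 2 + (4 + 6 * α) * φ = 1) :
    2 / (3 + 2 * φ) = 1 - 2 * (1 + α) * φ := by
  rw [div_eq_iff (by positivity)]
  linear_combination hq

theorem rate₂_eq (hφ : 0 < φ) (hq : 4 * (1 + α) * φ ^ 2 + (4 + 6 * α) * φ = 1) :
    4 * (1 + α) / (2 + 1 / φ) = 1 - 2 * (1 + α) * φ := by
  rw [div_eq_iff (by positivity)]
  field_simp
  linear_combination hq

theorem le_rate₃ (hα : 0 ≤ α) (hφ : 0 < φ) (hq : 4 * (1 + α) * φ ^ 2 + (4 + 6 * α) * φ = 1) :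
    1 - 2 * (1 + α) * φ ≤ 4 / (1 + φ) := by
  rw [le_div_iff₀ (by positivity)]
  nlinarith [mul_nonneg hα hφ.le]

theorem crossing_pos (hα : -1 < α) (hs : 0 ≤ s) (hs2 : s ^ 2 = 8 + 16 * α + 9 * α ^ 2) :
    0 < crossing α s :=
  div_pos (by nlinarith) (by linarith)

theorem crossing_isRoot (hα : -1 < α) (hs2 : s ^ 2 = 8 + 16 * α + 9 * α ^ 2) :
    4 * (1 + α) * crossing α s ^ 2 + (4 + 6 * α) * crossing α s = 1 := by
  have : 1 + α ≠ 0 := by linarith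
  unfold crossing
  field_simp
  linear_combination hs2

theorem one_sub_mul_crossing (hα : -1 < α) :
    1 - 2 * (1 + α) * crossing α s = 1 / 2 * (4 + 3 * α - s) := by
  have : 1 + α ≠ 0 := by linarith
  unfold crossing
  field_simp
  ring

end NAG

open NAG

theorem nag_rate_optimization_general (α : ℝ) (hα0 : 0 < α) :
    sSup {x : ℝ | ∃ φ : ℝ, 0 < φ ∧
        x = min (2 / (3 + 2 * φ)) (min (4 * (1 + α) / (2 + 1 / φ)) (4 / (1 + φ)))} =
      (1 / 2) * (4 + 3 * α - Real.sqrt (8 + 16 * α + 9 * α ^ 2)) := by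
  set s := Real.sqrt (8 + 16 * α + 9 * α ^ 2)
  have hα : -1 < α := by linarith
  have hs2 : s ^ 2 = 8 + 16 * α + 9 * α ^ 2 := Real.sq_sqrt (by positivity)
  have hφ₀ : 0 < crossing α s := crossing_pos hα (Real.sqrt_nonneg _) hs2
  have hq := crossing_isRoot hα hs2
  rw [← one_sub_mul_crossing hα]
  exact (isGreatest_min_of_antitoneOn_of_monotoneOn antitoneOn_rate₁ (monotoneOn_rate₂ hα.le)
    hφ₀ (rate₁_eq hφ₀ hq) (rate₂_eq hφ₀ hq) (le_rate₃ hα0.le hφ₀ hq)).csSup_eq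

theorem nag_rate_optimization (α : ℝ) (hα0 : 0 < α) (hα1 : α ≤ 1 / 2) :
    sSup {x : ℝ | ∃ φ : ℝ, 0 < φ ∧
        x = min (2 / (3 + 2 * φ)) (min (4 * (1 + α) / (2 + 1 / φ)) (4 / (1 + φ)))} =
      (1 / 2) * (4 + 3 * α - Real.sqrt (8 + 16 * α + 9 * α ^ 2)) :=
  nag_rate_optimization_general α hα0
end

section
/- For every real α with 0 < α ≤ 1/2, the quantity ρ*_NAG(α) := (1/2) · (4 + 3α − √(8 + 16α + 9α²)) satisfies 2 − √2 < ρ*_NAG(α) ≤ (11 − √73)/4. In particular, ρ*_NAG(α) strictly exceeds the heavy-ball rate constant 2 − √2. -/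
/-!
Completing the square, `8 + 16α + 9α² = (3α + 8/3)² + 8/9`, so the rate is an affine function of
`x - √(x² + c)` with `x = 3α + 8/3` and `c = 8/9`. That map is strictly increasing on all of `ℝ`,
since `√(x² + c) > |x|`. Hence the rate is strictly increasing in `α`, and the two bounds are its
values `2 - √2` at `α = 0` and `(11 - √73)/4` at `α = 1/2`.
-/

open Real

theorem sub_sqrt_sq_add_strictMono {c : ℝ} (hc : 0 < c) :
    StrictMono fun x : ℝ => x - √(x ^ 2 + c) := by
  intro x y hxy
  have hx : x < √(x ^ 2 + c) :=
    (le_abs_self x).trans_lt <| by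
      rw [← sqrt_sq_eq_abs]; exact sqrt_lt_sqrt (sq_nonneg x) (lt_add_of_pos_right _ hc)
  have hsq : √(x ^ 2 + c) ^ 2 = x ^ 2 + c := sq_sqrt (by positivity)
  suffices √(y ^ 2 + c) < y - x + √(x ^ 2 + c) by simp only; linarith
  rw [sqrt_lt' (by linarith [sqrt_nonneg (x ^ 2 + c)])]
  nlinarith [mul_pos (sub_pos.2 hxy) (sub_pos.2 hx)]

noncomputable def nagRate (α : ℝ) : ℝ :=
  (1 / 2) * (4 + 3 * α - √(8 + 16 * α + 9 * α ^ 2))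

theorem nagRate_strictMono : StrictMono nagRate := by
  intro a b hab
  have key := sub_sqrt_sq_add_strictMono (c := 8 / 9) (by norm_num)
    (show 3 * a + 8 / 3 < 3 * b + 8 / 3 by linarith)
  have completeSquare (α : ℝ) : 8 + 16 * α + 9 * α ^ 2 = (3 * α + 8 / 3) ^ 2 + 8 / 9 := by ring
  simp only [nagRate, completeSquare] at key ⊢
  linarith

theorem nagRate_zero : nagRate 0 = 2 - √2 := by
  have : √8 = 2 * √2 := by
    rw [show (8 : ℝ) = 2 ^ 2 * 2 by norm_num, sqrt_mul (by norm_num), sqrt_sq (by norm_num)]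
  norm_num [nagRate, this]
  ring

theorem nagRate_one_half : nagRate (1 / 2) = (11 - √73) / 4 := by
  have : √(73 / 4) = √73 / 2 := by
    rw [sqrt_div' _ (by norm_num), show (4 : ℝ) = 2 ^ 2 by norm_num, sqrt_sq (by norm_num)]
  norm_num [nagRate, this]
  ring

theorem nag_rate_exceeds_hb_rate (α : ℝ) (hα0 : 0 < α) (hα1 : α ≤ 1 / 2) :
    2 - Real.sqrt 2 < (1 / 2) * (4 + 3 * α - Real.sqrt (8 + 16 * α + 9 * α ^ 2)) ∧
      (1 / 2) * (4 + 3 * α - Real.sqrt (8 + 16 * α + 9 * α ^ 2)) ≤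
        (11 - Real.sqrt 73) / 4 := by
  rw [← nagRate_zero, ← nagRate_one_half]
  exact ⟨nagRate_strictMono hα0, nagRate_strictMono.monotone hα1⟩
end

section
/- The supremum over all real φ > 0 of min{ 2/(3 + 2φ), 4/(2 + 1/φ), 4/(1 + φ) } equals 2 − √2. -/
/-!
The third term never attains the minimum, since `2 / (3 + 2φ) ≤ 4 / (1 + φ)` for `φ ≥ 0`.
Of the remaining two, `2 / (3 + 2φ)` decreases and `4 / (2 + 1/φ)` increases in `φ`, so the
supremum of their minimum is attained where they cross, at `φ = (√2 - 1) / 2`, the positive root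
of `4φ² + 4φ - 1`; there both equal `2 / (2 + √2) = 2 - √2`.
-/

open Set

theorem isGreatest_image_min_of_antitoneOn_of_monotoneOn {α β : Type*} [LinearOrder α]
    [LinearOrder β] {s : Set α} {f g : α → β} {c : α} {v : β} (hf : AntitoneOn f s)
    (hg : MonotoneOn g s) (hc : c ∈ s) (hfc : f c = v) (hgc : g c = v) :
    IsGreatest ((fun x ↦ min (f x) (g x)) '' s) v := by
  refine ⟨⟨c, hc, by simp [hfc, hgc]⟩, ?_⟩
  rintro _ ⟨x, hx, rfl⟩
  rcases le_total x c with hxc | hcx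
  · exact (min_le_right _ _).trans (hgc ▸ hg hx hc hxc)
  · exact (min_le_left _ _).trans (hfc ▸ hf hc hx hcx)

theorem two_div_three_add_two_mul_le_four_div_one_add {φ : ℝ} (hφ : 0 ≤ φ) :
    2 / (3 + 2 * φ) ≤ 4 / (1 + φ) := by
  rw [div_le_div_iff₀ (by positivity) (by positivity)]
  linarith

theorem antitoneOn_two_div_three_add_two_mul :
    AntitoneOn (fun φ : ℝ ↦ 2 / (3 + 2 * φ)) (Ioi 0) := by
  intro x hx y _ hxy
  exact div_le_div_of_nonneg_left zero_le_two (by linarith [mem_Ioi.mp hx]) (by linarith)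

theorem monotoneOn_four_div_two_add_inv :
    MonotoneOn (fun φ : ℝ ↦ 4 / (2 + 1 / φ)) (Ioi 0) := by
  intro x hx y hy hxy
  exact div_le_div_of_nonneg_left zero_le_four (by linarith [one_div_pos.mpr (mem_Ioi.mp hy)])
    (by linarith [one_div_le_one_div_of_le (mem_Ioi.mp hx) hxy])

theorem two_div_two_add_sqrt_two : 2 / (2 + √2) = 2 - √2 := by
  have hsq : √2 ^ 2 = 2 := Real.sq_sqrt zero_le_two
  rw [div_eq_iff (by positivity)]
  nlinarith

theorem two_div_three_add_sqrt_two_sub_one :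
    2 / (3 + 2 * ((√2 - 1) / 2)) = 2 - √2 := by
  rw [← two_div_two_add_sqrt_two]
  ring_nf

theorem four_div_two_add_inv_sqrt_two_sub_one :
    4 / (2 + 1 / ((√2 - 1) / 2)) = 2 - √2 := by
  have hsq : √2 ^ 2 = 2 := Real.sq_sqrt zero_le_two
  have hinv : 1 / ((√2 - 1) / 2) = 2 * (√2 + 1) := by
    rw [div_div_eq_mul_div, one_mul, div_eq_iff (by nlinarith)]
    nlinarith
  rw [hinv, ← two_div_two_add_sqrt_two, div_eq_div_iff (by positivity) (by positivity)]
  ring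

theorem nag_rate_without_gradient_correction :
    sSup {x : ℝ | ∃ φ : ℝ, 0 < φ ∧
        x = min (2 / (3 + 2 * φ)) (min (4 / (2 + 1 / φ)) (4 / (1 + φ)))} =
      2 - Real.sqrt 2 := by
  have hset : {x : ℝ | ∃ φ : ℝ, 0 < φ ∧
      x = min (2 / (3 + 2 * φ)) (min (4 / (2 + 1 / φ)) (4 / (1 + φ)))} =
      (fun φ : ℝ ↦ min (2 / (3 + 2 * φ)) (4 / (2 + 1 / φ))) '' Ioi 0 := by
    ext x
    refine exists_congr fun φ ↦ and_congr_right fun hφ ↦ ?_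
    rw [min_left_comm, min_eq_left (two_div_three_add_two_mul_le_four_div_one_add hφ.le),
      min_comm, eq_comm]
  have hc : (√2 - 1) / 2 ∈ Ioi (0 : ℝ) := by
    have : (1 : ℝ) < √2 := by rw [Real.lt_sqrt zero_le_one]; norm_num
    exact div_pos (sub_pos.mpr this) two_pos
  rw [hset]
  exact (isGreatest_image_min_of_antitoneOn_of_monotoneOn antitoneOn_two_div_three_add_two_mul
    monotoneOn_four_div_two_add_inv hc two_div_three_add_sqrt_two_sub_one
    four_div_two_add_inv_sqrt_two_sub_one).csSup_eq
end

section
/- Let n be a positive integer, H a symmetric n×n real matrix, and λ0, s positive reals. Let Δ : ℝ → ℝⁿ be twice continuously differentiable and satisfy Δ''(t) + √(2λ0) Δ'(t) + √s H Δ'(t) + (1 + √(λ0 s/2)) H Δ(t) = 0 for all t. Define V(t) := (1 + √(λ0 s/2)) L̂(t) + (1/4)‖Δ'(t)‖² + (1/4)‖Δ'(t) + √(2λ0) Δ(t) + √s H Δ(t)‖², where L̂(t) := (1/2) Δ(t)ᵀ H Δ(t). Then for all t, V is differentiable with V'(t) = −(√(2λ0)/2)‖Δ'(t)‖² − (√s/2)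 Δ'(t)ᵀ H Δ'(t) − (1 + √(λ0 s/2)) √(2λ0) L̂(t) − (√s/2)(1 + √(λ0 s/2)) ‖H Δ(t)‖². -/
open scoped RealInnerProductSpace

section

variable {E : Type*} [NormedAddCommGroup E] [InnerProductSpace ℝ E] {A : E →L[ℝ] E}
  {x v : ℝ → E} {t : ℝ}

theorem HasDerivAt.inner_apply_self (hA : (A : E →ₗ[ℝ] E).IsSymmetric)
    (hx : HasDerivAt x (v t) t) :
    HasDerivAt (fun τ => ⟪x τ, A (x τ)⟫) (2 * ⟪v t, A (x t)⟫) t := by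
  have hsymm : ⟪x t, A (v t)⟫ = ⟪v t, A (x t)⟫ :=
    (hA (x t) (v t)).symm.trans (real_inner_comm _ _)
  refine (hx.inner ℝ (A.hasFDerivAt.comp_hasDerivAt t hx)).congr_deriv ?_
  rw [hsymm, two_mul]
  rfl

/-- Along `x'' + a x' + b A x' + c A x = 0` the cross terms `⟪x', A x⟫` of the three summands
cancel, because `(x' + a x + b A x)' = -c A x`. -/
theorem hasDerivAt_nagLyapunov (hA : (A : E →ₗ[ℝ] E).IsSymmetric) {a b c : ℝ}
    (hx : HasDerivAt x (v t) t)
    (hv : HasDerivAt v (-(a • v t + b • A (v t) + c • A (x t))) t) :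
    HasDerivAt (fun τ => c * ((1 / 2) * ⟪x τ, A (x τ)⟫) + (1 / 4) * ‖v τ‖ ^ 2
        + (1 / 4) * ‖v τ + a • x τ + b • A (x τ)‖ ^ 2)
      (-(a / 2) * ‖v t‖ ^ 2 - (b / 2) * ⟪v t, A (v t)⟫
        - c * a * ((1 / 2) * ⟪x t, A (x t)⟫) - (b / 2) * c * ‖A (x t)‖ ^ 2) t := by
  have hAx : HasDerivAt (fun τ => A (x τ)) (A (v t)) t := A.hasFDerivAt.comp_hasDerivAt t hx
  have hz : HasDerivAt (fun τ => v τ + a • x τ + b • A (x τ)) (-(c • A (x t))) t :=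
    ((hv.add (hx.const_smul a)).add (hAx.const_smul b)).congr_deriv (by abel)
  refine ((((hx.inner_apply_self hA).const_mul (1 / 2)).const_mul c).add
    (hv.norm_sq.const_mul (1 / 4)) |>.add (hz.norm_sq.const_mul (1 / 4))).congr_deriv ?_
  simp only [inner_add_left, inner_add_right, inner_neg_right, inner_smul_left,
    inner_smul_right, RCLike.conj_to_real, ← real_inner_self_eq_norm_sq]
  rw [real_inner_comm (A (x t)) (x t)]
  ring

end

theorem nag_lyapunov_derivative_general
    (n : ℕ) (H : Matrix (Fin n) (Fin n) ℝ) (hHsymm : H.IsSymm)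
    (lam0 s : ℝ)
    (Δ : ℝ → EuclideanSpace ℝ (Fin n)) (hΔ : ContDiff ℝ 2 Δ)
    (hode : ∀ t : ℝ,
      deriv (deriv Δ) t + Real.sqrt (2 * lam0) • deriv Δ t
        + Real.sqrt s • Matrix.toEuclideanLin H (deriv Δ t)
        + (1 + Real.sqrt (lam0 * s / 2)) • Matrix.toEuclideanLin H (Δ t) = 0) :
    ∀ t : ℝ,
      HasDerivAt (fun τ : ℝ =>
        (1 + Real.sqrt (lam0 * s / 2)) * ((1 / 2) * ⟪Δ τ, Matrix.toEuclideanLin H (Δ τ)⟫)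
          + (1 / 4) * ‖deriv Δ τ‖ ^ 2
          + (1 / 4) * ‖deriv Δ τ + Real.sqrt (2 * lam0) • Δ τ
              + Real.sqrt s • Matrix.toEuclideanLin H (Δ τ)‖ ^ 2)
        (-(Real.sqrt (2 * lam0) / 2) * ‖deriv Δ t‖ ^ 2
          - (Real.sqrt s / 2) * ⟪deriv Δ t, Matrix.toEuclideanLin H (deriv Δ t)⟫
          - (1 + Real.sqrt (lam0 * s / 2)) * Real.sqrt (2 * lam0) *
              ((1 / 2) * ⟪Δ t, Matrix.toEuclideanLin H (Δ t)⟫)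
          - (Real.sqrt s / 2) * (1 + Real.sqrt (lam0 * s / 2)) *
              ‖Matrix.toEuclideanLin H (Δ t)‖ ^ 2)
        t := by
  intro t
  have hA : (Matrix.toEuclideanLin H).IsSymmetric :=
    Matrix.isSymmetric_toEuclideanLin_iff.mpr (Matrix.isHermitian_iff_isSymm.mpr hHsymm)
  have hΔ' : Differentiable ℝ (deriv Δ) := by
    simpa only [iteratedDeriv_one] using hΔ.differentiable_iteratedDeriv 1 (by norm_num)
  have hacc : deriv (deriv Δ) t = -(Real.sqrt (2 * lam0) • deriv Δ t
      + Real.sqrt s • Matrix.toEuclideanLin H (deriv Δ t)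
      + (1 + Real.sqrt (lam0 * s / 2)) • Matrix.toEuclideanLin H (Δ t)) :=
    eq_neg_of_add_eq_zero_left (by rw [← hode t]; abel)
  exact hasDerivAt_nagLyapunov (A := (Matrix.toEuclideanLin H).toContinuousLinearMap) hA
    ((hΔ.differentiable (by norm_num) t).hasDerivAt) (hacc ▸ (hΔ' t).hasDerivAt)

theorem nag_lyapunov_derivative
    (n : ℕ) (hn : 0 < n) (H : Matrix (Fin n) (Fin n) ℝ) (hHsymm : H.IsSymm)
    (lam0 s : ℝ) (hlam0 : 0 < lam0) (hs : 0 < s)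
    (Δ : ℝ → EuclideanSpace ℝ (Fin n)) (hΔ : ContDiff ℝ 2 Δ)
    (hode : ∀ t : ℝ,
      deriv (deriv Δ) t + Real.sqrt (2 * lam0) • deriv Δ t
        + Real.sqrt s • Matrix.toEuclideanLin H (deriv Δ t)
        + (1 + Real.sqrt (lam0 * s / 2)) • Matrix.toEuclideanLin H (Δ t) = 0) :
    ∀ t : ℝ,
      HasDerivAt (fun τ : ℝ =>
        (1 + Real.sqrt (lam0 * s / 2)) * ((1 / 2) * ⟪Δ τ, Matrix.toEuclideanLin H (Δ τ)⟫)
          + (1 / 4) * ‖deriv Δ τ‖ ^ 2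
          + (1 / 4) * ‖deriv Δ τ + Real.sqrt (2 * lam0) • Δ τ
              + Real.sqrt s • Matrix.toEuclideanLin H (Δ τ)‖ ^ 2)
        (-(Real.sqrt (2 * lam0) / 2) * ‖deriv Δ t‖ ^ 2
          - (Real.sqrt s / 2) * ⟪deriv Δ t, Matrix.toEuclideanLin H (deriv Δ t)⟫
          - (1 + Real.sqrt (lam0 * s / 2)) * Real.sqrt (2 * lam0) *
              ((1 / 2) * ⟪Δ t, Matrix.toEuclideanLin H (Δ t)⟫)
          - (Real.sqrt s / 2) * (1 + Real.sqrt (lam0 * s / 2)) *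
              ‖Matrix.toEuclideanLin H (Δ t)‖ ^ 2)
        t :=
  nag_lyapunov_derivative_general n H hHsymm lam0 s Δ hΔ hode
end

section
/- Let n be a positive integer, H a symmetric n×n real matrix, and λ0, λm, s positive reals with 0 < s ≤ 2/λm, such that (λ0/2)‖v‖² ≤ vᵀHv ≤ λm‖v‖² for all v ∈ ℝⁿ. Let Δ : ℝ → ℝⁿ be twice continuously differentiable and satisfy Δ''(t) + √(2λ0) Δ'(t) + (1 + √(λ0 s/2)) H Δ(t) = 0 for all t ≥ 0, with Δ'(0) = 0. Then the pseudo-loss L̂(t) := (1/2) Δ(t)ᵀ H Δ(t) satisfies, for all t ≥ 0, L̂(t) ≤ ((3 + √(λ0 s/2))/(1 + √(λ0 s/2))) · L̂(0) · exp(−(2−√2) √(λ0/2) t). -/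
open scoped RealInnerProductSpace

/-! With `β = √(λ₀/2)` and `c = 1 + √(λ₀ s/2)`, the ODE reads `Δ'' + 2βΔ' + cHΔ = 0`, and the
Lyapunov function `V = c⟪Δ, HΔ⟫ + ‖Δ' + βΔ‖²` satisfies
`V' + βV = -β (‖Δ'‖² + c⟪Δ, HΔ⟫ - β²‖Δ‖²) ≤ 0`, because `⟪Δ, HΔ⟫ ≥ β²‖Δ‖²` and `c ≥ 1`.
Grönwall gives `V(t) ≤ V(0) e^{-βt}`, already a better rate than `(2 - √2)β`. Finally
`c⟪Δ, HΔ⟫ ≤ V`, and `V(0) ≤ (c + 1)⟪Δ(0), HΔ(0)⟫` since `Δ'(0) = 0`. -/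

open Real Set

theorem le_mul_exp_of_hasDerivAt_le_mul_s11 {f f' : ℝ → ℝ} {K : ℝ}
    (hf : ∀ t, 0 ≤ t → HasDerivAt f (f' t) t) (hbound : ∀ t, 0 ≤ t → f' t ≤ K * f t) :
    ∀ t, 0 ≤ t → f t ≤ f 0 * exp (K * t) := by
  intro t ht
  have hcont : ContinuousOn f (Icc 0 t) := fun x hx => (hf x hx.1).continuousAt.continuousWithinAt
  simpa [gronwallBound_ε0] using
    le_gronwallBound_of_liminf_deriv_right_le (K := K) (ε := 0) hcont
    (fun x hx _ hr => (hf x hx.1).hasDerivWithinAt.liminf_right_slope_le hr) le_rfl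
    (fun x hx => by simpa using hbound x hx.1) t ⟨ht, le_rfl⟩

section HeavyBall

variable {E : Type*} [NormedAddCommGroup E] [InnerProductSpace ℝ E] {A : E →L[ℝ] E}

theorem LinearMap.IsSymmetric.hasDerivAt_inner_apply_self (hA : (A : E →ₗ[ℝ] E).IsSymmetric)
    {y : ℝ → E} {v : E} {t : ℝ} (hy : HasDerivAt y v t) :
    HasDerivAt (fun t => ⟪y t, A (y t)⟫) (2 * ⟪v, A (y t)⟫) t := by
  refine (hy.inner ℝ (A.hasFDerivAt.comp_hasDerivAt t hy)).congr_deriv ?_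
  change ⟪y t, A v⟫ + ⟪v, A (y t)⟫ = _
  have h := hA v (y t)
  rw [ContinuousLinearMap.coe_coe] at h
  rw [real_inner_comm, h]
  ring

def heavyBallEnergy (A : E →L[ℝ] E) (β c : ℝ) (y v : E) : ℝ :=
  c * ⟪y, A y⟫ + ‖v + β • y‖ ^ 2

theorem hasDerivAt_heavyBallEnergy (hA : (A : E →ₗ[ℝ] E).IsSymmetric) (β c : ℝ)
    {y v : ℝ → E} {v' a : E} {t : ℝ} (hy : HasDerivAt y v' t) (hv : HasDerivAt v a t) :
    HasDerivAt (fun t => heavyBallEnergy A β c (y t) (v t))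
      (c * (2 * ⟪v', A (y t)⟫) + 2 * ⟪v t + β • y t, a + β • v'⟫) t :=
  ((hA.hasDerivAt_inner_apply_self hy).const_mul c).add (hv.add (hy.const_smul β)).norm_sq

theorem heavyBallEnergy_deriv_le {β c : ℝ} (hβ : 0 ≤ β) (hc : 1 ≤ c) {y v a : E}
    (hcoer : β ^ 2 * ‖y‖ ^ 2 ≤ ⟪y, A y⟫)
    (hode : a + (2 * β) • v + c • A y = 0) :
    c * (2 * ⟪v, A y⟫) + 2 * ⟪v + β • y, a + β • v⟫ ≤ -β * heavyBallEnergy A β c y v := by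
  have ha : a + β • v = -(β • v) - c • A y := by
    rw [← sub_eq_zero, ← hode]; module
  have key : c * (2 * ⟪v, A y⟫) + 2 * ⟪v + β • y, a + β • v⟫ + β * heavyBallEnergy A β c y v
      = -β * (‖v‖ ^ 2 + c * ⟪y, A y⟫ - β ^ 2 * ‖y‖ ^ 2) := by
    rw [ha, heavyBallEnergy, norm_add_sq_real]
    simp only [inner_add_left, inner_sub_right, inner_neg_right, real_inner_smul_left,
      real_inner_smul_right, norm_smul, real_inner_self_eq_norm_sq]
    rw [Real.norm_eq_abs, mul_pow, sq_abs, real_inner_comm v y]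
    ring
  have hP : 0 ≤ ⟪y, A y⟫ := le_trans (by positivity) hcoer
  nlinarith [mul_le_mul_of_nonneg_right hc hP, sq_nonneg ‖v‖]

theorem heavyBallEnergy_le_exp (hA : (A : E →ₗ[ℝ] E).IsSymmetric) {β c : ℝ} (hβ : 0 ≤ β)
    (hc : 1 ≤ c) (hcoer : ∀ y, β ^ 2 * ‖y‖ ^ 2 ≤ ⟪y, A y⟫) {y v a : ℝ → E}
    (hy : ∀ t, 0 ≤ t → HasDerivAt y (v t) t) (hv : ∀ t, 0 ≤ t → HasDerivAt v (a t) t)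
    (hode : ∀ t, 0 ≤ t → a t + (2 * β) • v t + c • A (y t) = 0) :
    ∀ t, 0 ≤ t → heavyBallEnergy A β c (y t) (v t) ≤
      heavyBallEnergy A β c (y 0) (v 0) * exp (-β * t) :=
  le_mul_exp_of_hasDerivAt_le_mul_s11
    (fun t ht => hasDerivAt_heavyBallEnergy hA β c (hy t ht) (hv t ht))
    (fun t ht => heavyBallEnergy_deriv_le hβ hc (hcoer (y t)) (hode t ht))

theorem heavyBall_mul_inner_apply_self_le (hA : (A : E →ₗ[ℝ] E).IsSymmetric) {β c : ℝ}
    (hβ : 0 ≤ β) (hc : 1 ≤ c) (hcoer : ∀ y, β ^ 2 * ‖y‖ ^ 2 ≤ ⟪y, A y⟫) {y v a : ℝ → E}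
    (hy : ∀ t, 0 ≤ t → HasDerivAt y (v t) t) (hv : ∀ t, 0 ≤ t → HasDerivAt v (a t) t)
    (hode : ∀ t, 0 ≤ t → a t + (2 * β) • v t + c • A (y t) = 0) (hv0 : v 0 = 0) (t : ℝ)
    (ht : 0 ≤ t) :
    c * ⟪y t, A (y t)⟫ ≤ (c + 1) * ⟪y 0, A (y 0)⟫ * exp (-β * t) := by
  have hinit : heavyBallEnergy A β c (y 0) (v 0) ≤ (c + 1) * ⟪y 0, A (y 0)⟫ := by
    rw [heavyBallEnergy, hv0, zero_add, norm_smul, mul_pow, Real.norm_eq_abs, sq_abs]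
    linarith [hcoer (y 0)]
  calc c * ⟪y t, A (y t)⟫ ≤ heavyBallEnergy A β c (y t) (v t) :=
        le_add_of_nonneg_right (sq_nonneg _)
    _ ≤ heavyBallEnergy A β c (y 0) (v 0) * exp (-β * t) :=
        heavyBallEnergy_le_exp hA hβ hc hcoer hy hv hode t ht
    _ ≤ (c + 1) * ⟪y 0, A (y 0)⟫ * exp (-β * t) := by gcongr

end HeavyBall

theorem hb_pseudo_loss_convergence_general
    (n : ℕ) (H : Matrix (Fin n) (Fin n) ℝ) (hHsymm : H.IsSymm)
    (lam0 s : ℝ) (hlam0 : 0 < lam0)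
    (hlow : ∀ v : EuclideanSpace ℝ (Fin n),
      lam0 / 2 * ‖v‖ ^ 2 ≤ ⟪v, Matrix.toEuclideanLin H v⟫)
    (Δ : ℝ → EuclideanSpace ℝ (Fin n)) (hΔ : ContDiff ℝ 2 Δ)
    (hode : ∀ t : ℝ, 0 ≤ t →
      deriv (deriv Δ) t + Real.sqrt (2 * lam0) • deriv Δ t
        + (1 + Real.sqrt (lam0 * s / 2)) • Matrix.toEuclideanLin H (Δ t) = 0)
    (hinit : deriv Δ 0 = 0) :
    ∀ t : ℝ, 0 ≤ t →
      (1 / 2) * ⟪Δ t, Matrix.toEuclideanLin H (Δ t)⟫ ≤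
        (3 + Real.sqrt (lam0 * s / 2)) / (1 + Real.sqrt (lam0 * s / 2)) *
          ((1 / 2) * ⟪Δ 0, Matrix.toEuclideanLin H (Δ 0)⟫) *
          Real.exp (-(2 - Real.sqrt 2) * Real.sqrt (lam0 / 2) * t) := by
  intro t ht
  set q := √(lam0 * s / 2)
  set β := √(lam0 / 2)
  have hq : 0 ≤ q := sqrt_nonneg _
  have hβ : 0 ≤ β := sqrt_nonneg _
  have hβsq : β ^ 2 = lam0 / 2 := sq_sqrt (by positivity)
  have hdamp : √(2 * lam0) = 2 * β := by
    rw [show 2 * lam0 = 2 ^ 2 * (lam0 / 2) by ring, sqrt_mul (by norm_num), sqrt_sq (by norm_num)]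
  have hA : (Matrix.toEuclideanLin H).IsSymmetric :=
    Matrix.isSymmetric_toEuclideanLin_iff.mpr (Matrix.isHermitian_iff_isSymm.mpr hHsymm)
  have h2 : ContDiff ℝ (1 + 1) Δ := hΔ
  have hbound := heavyBall_mul_inner_apply_self_le
    (A := Matrix.toEuclideanCLM (n := Fin n) (𝕜 := ℝ) H) (c := 1 + q) hA hβ (by linarith)
    (fun v => hβsq ▸ hlow v)
    (fun t _ => (hΔ.differentiable two_ne_zero t).hasDerivAt)
    (fun t _ => (h2.deriv'.differentiable one_ne_zero t).hasDerivAt)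
    (fun t ht => hdamp ▸ hode t ht) hinit t ht
  have hP0 : 0 ≤ ⟪Δ 0, Matrix.toEuclideanLin H (Δ 0)⟫ := le_trans (by positivity) (hlow (Δ 0))
  have hrate : -β * t ≤ -(2 - √2) * β * t := by nlinarith [one_lt_sqrt_two, mul_nonneg hβ ht]
  calc (1 / 2) * ⟪Δ t, Matrix.toEuclideanLin H (Δ t)⟫
      = (1 + q) * ⟪Δ t, Matrix.toEuclideanLin H (Δ t)⟫ / (2 * (1 + q)) := by field_simp
    _ ≤ (1 + q + 1) * ⟪Δ 0, Matrix.toEuclideanLin H (Δ 0)⟫ * exp (-β * t) / (2 * (1 + q)) := by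
        gcongr ?_ / _; exact hbound
    _ ≤ (3 + q) * ⟪Δ 0, Matrix.toEuclideanLin H (Δ 0)⟫ * exp (-(2 - √2) * β * t) /
          (2 * (1 + q)) := by
        gcongr ?_ * _ * exp ?_ / _; linarith
    _ = _ := by field_simp

theorem hb_pseudo_loss_convergence
    (n : ℕ) (hn : 0 < n) (H : Matrix (Fin n) (Fin n) ℝ) (hHsymm : H.IsSymm)
    (lam0 lamm s : ℝ) (hlam0 : 0 < lam0) (hlamm : 0 < lamm)
    (hs : 0 < s) (hs2 : s ≤ 2 / lamm)
    (hlow : ∀ v : EuclideanSpace ℝ (Fin n),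
      lam0 / 2 * ‖v‖ ^ 2 ≤ ⟪v, Matrix.toEuclideanLin H v⟫)
    (hup : ∀ v : EuclideanSpace ℝ (Fin n),
      ⟪v, Matrix.toEuclideanLin H v⟫ ≤ lamm * ‖v‖ ^ 2)
    (Δ : ℝ → EuclideanSpace ℝ (Fin n)) (hΔ : ContDiff ℝ 2 Δ)
    (hode : ∀ t : ℝ, 0 ≤ t →
      deriv (deriv Δ) t + Real.sqrt (2 * lam0) • deriv Δ t
        + (1 + Real.sqrt (lam0 * s / 2)) • Matrix.toEuclideanLin H (Δ t) = 0)
    (hinit : deriv Δ 0 = 0) :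
    ∀ t : ℝ, 0 ≤ t →
      (1 / 2) * ⟪Δ t, Matrix.toEuclideanLin H (Δ t)⟫ ≤
        (3 + Real.sqrt (lam0 * s / 2)) / (1 + Real.sqrt (lam0 * s / 2)) *
          ((1 / 2) * ⟪Δ 0, Matrix.toEuclideanLin H (Δ 0)⟫) *
          Real.exp (-(2 - Real.sqrt 2) * Real.sqrt (lam0 / 2) * t) :=
  hb_pseudo_loss_convergence_general n H hHsymm lam0 s hlam0 hlow Δ hΔ hode hinit
end

section
/- Let d be a positive integer, b, c, A real numbers with 0 < c < b and A ≥ 0, and g : ℝ → ℝ^d a continuous function with ‖g(t)‖ ≤ A e^{−c t} for all t ≥ 0. Let u : ℝ → ℝ^d be twice continuously differentiable with u'(0) = 0 and u''(t) + b u'(t) + g(t) = 0 for all t ≥ 0. Then for all t ≥ 0: (i) ‖u'(t)‖ ≤ (A/(b − c)) e^{−c t}, and (ii) ‖u(t) − u(0)‖ ≤ A/(c (b − c)). -/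
/-!
The integrating factor `exp (b t)` turns `v' + b v + g = 0`, for `v = u'`, into
`(exp (b t) v)' = -exp (b t) g`, whose norm is at most `A exp ((b - c) t)`. Comparing
`exp (b t) v` with the antiderivative `A / (b - c) * exp ((b - c) t)` of that bound gives
`‖u' t‖ ≤ A / (b - c) * exp (-c t)`; comparing `u` with an antiderivative of this new bound
gives the drift estimate `A / (c (b - c))`.
-/

open Real Set

theorem hasDerivAt_const_mul_exp_mul (C k x : ℝ) :
    HasDerivAt (fun τ => C * exp (k * τ)) (C * k * exp (k * x)) x := by
  refine ((((hasDerivAt_id x).const_mul k).exp).const_mul C).congr_deriv ?_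
  simp only [id, mul_one]
  ring

section

variable {E : Type*} [NormedAddCommGroup E] [NormedSpace ℝ E]

theorem norm_sub_le_sub_of_norm_deriv_le_deriv {f f' : ℝ → E} {B B' : ℝ → ℝ} {a b : ℝ}
    (hab : a ≤ b) (hf : ∀ x ∈ Icc a b, HasDerivAt f (f' x) x)
    (hB : ∀ x, HasDerivAt B (B' x) x) (bound : ∀ x ∈ Ico a b, ‖f' x‖ ≤ B' x) :
    ‖f b - f a‖ ≤ B b - B a := by
  have hcont : ContinuousOn (fun x => f x - f a) (Icc a b) := fun x hx =>
    ((hf x hx).continuousAt.continuousWithinAt).sub continuousWithinAt_const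
  refine image_norm_le_of_norm_deriv_right_le_deriv_boundary hcont
    (fun x hx => ((hf x (Ico_subset_Icc_self hx)).sub_const (f a)).hasDerivWithinAt)
    (by simp) (fun x => (hB x).sub_const (B a)) bound ⟨hab, le_rfl⟩

theorem norm_sub_le_div_of_norm_deriv_le_mul_exp {u v : ℝ → E} {K c : ℝ} (hc : 0 < c)
    (hu : ∀ t, 0 ≤ t → HasDerivAt u (v t) t) (hv : ∀ t, 0 ≤ t → ‖v t‖ ≤ K * exp (-c * t))
    {t : ℝ} (ht : 0 ≤ t) : ‖u t - u 0‖ ≤ K / c := by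
  have hK : 0 ≤ K := by simpa using (norm_nonneg _).trans (hv 0 le_rfl)
  have hdrift := norm_sub_le_sub_of_norm_deriv_le_deriv ht (fun x hx => hu x hx.1)
    (hasDerivAt_const_mul_exp_mul (-(K / c)) (-c))
    (fun x hx => by simpa [hc.ne'] using hv x hx.1)
  simp only [mul_zero, exp_zero] at hdrift
  have := mul_nonneg (div_nonneg hK hc.le) (exp_pos (-c * t)).le
  linarith

theorem norm_le_of_hasDerivAt_add_smul_add_eq_zero {v v' g : ℝ → E} {b c A : ℝ} (hcb : c < b)
    (hv : ∀ t, 0 ≤ t → HasDerivAt v (v' t) t) (hode : ∀ t, 0 ≤ t → v' t + b • v t + g t = 0)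
    (hv0 : v 0 = 0) (hg : ∀ t, 0 ≤ t → ‖g t‖ ≤ A * exp (-c * t)) {t : ℝ} (ht : 0 ≤ t) :
    ‖v t‖ ≤ A / (b - c) * exp (-c * t) := by
  have hA : 0 ≤ A := by simpa using (norm_nonneg _).trans (hg 0 le_rfl)
  have hbc : 0 < b - c := sub_pos.2 hcb
  have hw : ∀ τ, 0 ≤ τ → HasDerivAt (fun τ => exp (b * τ) • v τ) (-(exp (b * τ) • g τ)) τ := by
    intro τ hτ
    refine (((hasDerivAt_id τ).const_mul b).exp.smul (hv τ hτ)).congr_deriv ?_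
    rw [id, ← neg_eq_iff_add_eq_zero.2 (hode τ hτ)]
    module
  have hbound := norm_sub_le_sub_of_norm_deriv_le_deriv ht (fun x hx => hw x hx.1)
    (hasDerivAt_const_mul_exp_mul (A / (b - c)) (b - c))
    (fun x hx => by
      rw [norm_neg, norm_smul, norm_of_nonneg (exp_pos _).le, div_mul_cancel₀ _ hbc.ne']
      calc exp (b * x) * ‖g x‖ ≤ exp (b * x) * (A * exp (-c * x)) := by gcongr; exact hg x hx.1
        _ = A * exp ((b - c) * x) := by rw [mul_left_comm, ← exp_add]; ring_nf)
  simp only [mul_zero, exp_zero, hv0, smul_zero, sub_zero, norm_smul,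
    norm_of_nonneg (exp_pos _).le] at hbound
  rw [show (b - c) * t = b * t + -c * t by ring, exp_add] at hbound
  rw [← mul_le_mul_iff_right₀ (exp_pos (b * t))]
  linarith [div_nonneg hA hbc.le]

end

theorem weight_drift_bound_general
    (d : ℕ) (b c A : ℝ) (hc : 0 < c) (hcb : c < b)
    (g : ℝ → EuclideanSpace ℝ (Fin d))
    (hgb : ∀ t : ℝ, 0 ≤ t → ‖g t‖ ≤ A * Real.exp (-c * t))
    (u : ℝ → EuclideanSpace ℝ (Fin d)) (hu : ContDiff ℝ 2 u)
    (hu0 : deriv u 0 = 0)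
    (hode : ∀ t : ℝ, 0 ≤ t → deriv (deriv u) t + b • deriv u t + g t = 0) :
    ∀ t : ℝ, 0 ≤ t →
      ‖deriv u t‖ ≤ A / (b - c) * Real.exp (-c * t) ∧
        ‖u t - u 0‖ ≤ A / (c * (b - c)) := by
  have hvel : ∀ t, 0 ≤ t → ‖deriv u t‖ ≤ A / (b - c) * exp (-c * t) := fun t ht =>
    norm_le_of_hasDerivAt_add_smul_add_eq_zero hcb
      (fun τ _ => (hu.differentiable_deriv_two τ).hasDerivAt) hode hu0 hgb ht
  intro t ht
  refine ⟨hvel t ht, ?_⟩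
  calc ‖u t - u 0‖ ≤ A / (b - c) / c :=
        norm_sub_le_div_of_norm_deriv_le_mul_exp hc
          (fun τ _ => (hu.differentiable (by norm_num) τ).hasDerivAt) hvel ht
    _ = A / (c * (b - c)) := by rw [div_div, mul_comm]

theorem weight_drift_bound
    (d : ℕ) (hd : 0 < d) (b c A : ℝ) (hc : 0 < c) (hcb : c < b) (hA : 0 ≤ A)
    (g : ℝ → EuclideanSpace ℝ (Fin d)) (hg : Continuous g)
    (hgb : ∀ t : ℝ, 0 ≤ t → ‖g t‖ ≤ A * Real.exp (-c * t))
    (u : ℝ → EuclideanSpace ℝ (Fin d)) (hu : ContDiff ℝ 2 u)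
    (hu0 : deriv u 0 = 0)
    (hode : ∀ t : ℝ, 0 ≤ t → deriv (deriv u) t + b • deriv u t + g t = 0) :
    ∀ t : ℝ, 0 ≤ t →
      ‖deriv u t‖ ≤ A / (b - c) * Real.exp (-c * t) ∧
        ‖u t - u 0‖ ≤ A / (c * (b - c)) :=
  weight_drift_bound_general d b c A hc hcb g hgb u hu hu0 hode
end

section
/- Let x₁, …, xₙ ∈ ℝ^d be unit vectors such that for all i ≠ j, xᵢ ≠ xⱼ and xᵢ ≠ −xⱼ (i.e., no two data points are parallel). Define the n×n matrix H∞ by H∞_{ij} = ⟨xᵢ, xⱼ⟩ · γ({ w ∈ ℝ^d : ⟨w, xᵢ⟩ ≥ 0 and ⟨w, xⱼ⟩ ≥ 0 }), where γ is the standard Gaussian measure N(0, I_d) on ℝ^d. Then H∞ is symmetric positive definite; in particular its smallest eigenvalue λ0 := λ_min(H∞) is strictly positive. -/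
/-!
The quadratic form of the Gram matrix is `v ↦ E_w ‖∑ᵢ vᵢ 1{w ⬝ xᵢ ≥ 0} xᵢ‖²`, so it is nonnegative,
and if it vanishes then the vector field `S w = ∑ᵢ vᵢ 1{w ⬝ xᵢ ≥ 0} xᵢ` vanishes almost everywhere,
hence on a dense set, since the Gaussian charges every nonempty open set.
Fix `i`. As no `xⱼ` is parallel to `xᵢ`, some `w₀` lies on the hyperplane `xᵢ^⊥` but on none of
the hyperplanes `xⱼ^⊥`. Near `w₀` only the `i`-th gate can switch, so `S = vᵢ 1{w ⬝ xᵢ ≥ 0} xᵢ + C`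
there; zeros of `S` on both sides of `xᵢ^⊥` give `vᵢ xᵢ + C = 0 = C`, hence `vᵢ = 0`.
-/

open MeasureTheory Matrix Filter Topology Finset

theorem ProbabilityTheory.isOpenPosMeasure_gaussianReal (m : ℝ) {v : NNReal} (hv : v ≠ 0) :
    (gaussianReal m v).IsOpenPosMeasure :=
  ⟨fun _ hU hne h0 => hU.measure_ne_zero volume hne (gaussianReal_absolutelyContinuous' m hv h0)⟩

variable {ι κ : Type*} [Fintype ι]

theorem ne_smul_of_dotProduct_self_eq_one {x y : ι → ℝ} (hx : x ⬝ᵥ x = 1) (hy : y ⬝ᵥ y = 1)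
    (hne : x ≠ y) (hne_neg : x ≠ -y) (c : ℝ) : y ≠ c • x := by
  rintro rfl
  simp only [smul_dotProduct, dotProduct_smul, hx, smul_eq_mul, mul_one] at hy
  rcases mul_self_eq_one_iff.1 hy with rfl | rfl
  · exact hne (one_smul ℝ x).symm
  · exact hne_neg (by simp)

theorem exists_dotProduct_eq_zero_and_ne_zero {x y : ι → ℝ} (hy : ∀ c : ℝ, y ≠ c • x) :
    ∃ w : ι → ℝ, w ⬝ᵥ x = 0 ∧ w ⬝ᵥ y ≠ 0 := by
  set w := y - ((y ⬝ᵥ x) / (x ⬝ᵥ x)) • x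
  have hwx : w ⬝ᵥ x = 0 := by
    by_cases hx : x ⬝ᵥ x = 0
    · simp [w, dotProduct_self_eq_zero.mp hx]
    · simp [w, sub_dotProduct, smul_dotProduct, hx]
  refine ⟨w, hwx, fun hwy => hy ((y ⬝ᵥ x) / (x ⬝ᵥ x)) (sub_eq_zero.mp ?_)⟩
  have : w ⬝ᵥ w = 0 := by simp [w, dotProduct_sub, dotProduct_smul, hwx, hwy]
  exact dotProduct_self_eq_zero.mp this

theorem exists_dotProduct_eq_zero_and_forall_ne_zero [Finite κ] {x : ι → ℝ} {y : κ → ι → ℝ}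
    (hy : ∀ k (c : ℝ), y k ≠ c • x) :
    ∃ w : ι → ℝ, w ⬝ᵥ x = 0 ∧ ∀ k, w ⬝ᵥ y k ≠ 0 := by
  let H := LinearMap.ker (dotProductBilin ℝ ℝ |>.flip x)
  obtain ⟨w, hw⟩ := Module.Dual.exists_forall_ne_zero_of_forall_exists
    (fun k => (dotProductBilin ℝ ℝ |>.flip (y k)).domRestrict H) fun k => by
      obtain ⟨w, hwx, hwy⟩ := exists_dotProduct_eq_zero_and_ne_zero (hy k)
      exact ⟨⟨w, hwx⟩, hwy⟩
  exact ⟨w, w.2, hw⟩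

noncomputable def ntkFeature (x w : ι → ℝ) : ι → ℝ := if 0 ≤ w ⬝ᵥ x then x else 0

theorem ntkFeature_eventuallyEq {x w : ι → ℝ} (hw : w ⬝ᵥ x ≠ 0) :
    ntkFeature x =ᶠ[𝓝 w] fun _ => ntkFeature x w := by
  have hcont : Continuous fun u : ι → ℝ => u ⬝ᵥ x := by fun_prop
  rcases hw.lt_or_gt with hneg | hpos
  · filter_upwards [hcont.continuousAt.eventually (gt_mem_nhds hneg)] with u hu
    simp [ntkFeature, not_le.mpr hu, not_le.mpr hneg]
  · filter_upwards [hcont.continuousAt.eventually (lt_mem_nhds hpos)] with u hu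
    simp [ntkFeature, hu.le, hpos.le]

theorem mem_closure_setOf_pos_dotProduct {x w : ι → ℝ} (hx : x ≠ 0) (hw : w ⬝ᵥ x = 0) :
    w ∈ closure {u | 0 < u ⬝ᵥ x} := by
  have hline : Tendsto (fun t : ℝ => w + t • x) (𝓝[>] 0) (𝓝 w) := by
    have : Continuous fun t : ℝ => w + t • x := by fun_prop
    exact (this.tendsto' 0 w (by simp)).mono_left nhdsWithin_le_nhds
  refine mem_closure_of_tendsto hline ?_
  filter_upwards [self_mem_nhdsWithin] with t (ht : 0 < t)
  have hxx : 0 < x ⬝ᵥ x := by simpa using dotProduct_star_self_pos_iff.2 hx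
  simpa [add_dotProduct, smul_dotProduct, hw] using mul_pos ht hxx

theorem eq_zero_of_dense_setOf_sum_smul_ntkFeature_eq_zero [Fintype κ] {x : κ → ι → ℝ}
    {v : κ → ℝ} {i : κ} {w : ι → ℝ} (hxi : x i ≠ 0) (hwi : w ⬝ᵥ x i = 0)
    (hw : ∀ j ≠ i, w ⬝ᵥ x j ≠ 0) (hdense : Dense {u | ∑ j, v j • ntkFeature (x j) u = 0}) :
    v i = 0 := by
  classical
  set C := ∑ j ∈ univ.erase i, v j • ntkFeature (x j) w
  have hloc : ∀ᶠ u in 𝓝 w, ∑ j, v j • ntkFeature (x j) u = v i • ntkFeature (x i) u + C := by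
    have : ∀ᶠ u in 𝓝 w, ∀ j ∈ univ.erase i, ntkFeature (x j) u = ntkFeature (x j) w :=
      (eventually_all_finset _).2 fun j hj => ntkFeature_eventuallyEq (hw j (ne_of_mem_erase hj))
    filter_upwards [this] with u hu
    rw [← add_sum_erase _ _ (mem_univ i)]
    exact congrArg _ (sum_congr rfl fun j hj => by rw [hu j hj])
  have hzero : ∀ s : Set (ι → ℝ), IsOpen s → w ∈ closure s →
      ∃ u ∈ s, v i • ntkFeature (x i) u + C = 0 := by
    intro s hs hws
    have hws' := closure_minimal (hdense.open_subset_closure_inter hs) isClosed_closure hws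
    obtain ⟨u, ⟨hus, hu⟩, hloc_u⟩ :=
      ((mem_closure_iff_frequently.1 hws').and_eventually hloc).exists
    exact ⟨u, hus, hloc_u ▸ hu⟩
  have hpos : ∃ u, 0 < u ⬝ᵥ x i ∧ v i • ntkFeature (x i) u + C = 0 :=
    hzero _ (isOpen_lt continuous_const (continuous_id.dotProduct continuous_const))
      (mem_closure_setOf_pos_dotProduct hxi hwi)
  have hneg : ∃ u, 0 < u ⬝ᵥ -x i ∧ v i • ntkFeature (x i) u + C = 0 :=
    hzero _ (isOpen_lt continuous_const (continuous_id.dotProduct continuous_const))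
      (mem_closure_setOf_pos_dotProduct (neg_ne_zero.2 hxi) (by simp [hwi]))
  obtain ⟨upos, hupos, hCpos⟩ := hpos
  obtain ⟨uneg, huneg, hCneg⟩ := hneg
  rw [ntkFeature, if_pos hupos.le] at hCpos
  rw [dotProduct_neg, neg_pos] at huneg
  rw [ntkFeature, if_neg (not_le.2 huneg), smul_zero, zero_add] at hCneg
  rw [hCneg, add_zero, smul_eq_zero] at hCpos
  exact hCpos.resolve_right hxi

theorem ntkFeature_dotProduct_ntkFeature (x y w : ι → ℝ) :
    ntkFeature x w ⬝ᵥ ntkFeature y w =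
      {u | 0 ≤ u ⬝ᵥ x ∧ 0 ≤ u ⬝ᵥ y}.indicator (fun _ => x ⬝ᵥ y) w := by
  by_cases hx : 0 ≤ w ⬝ᵥ x <;> by_cases hy : 0 ≤ w ⬝ᵥ y <;>
    simp [ntkFeature, hx, hy]

theorem measurableSet_setOf_dotProduct_nonneg (x y : ι → ℝ) :
    MeasurableSet {u : ι → ℝ | 0 ≤ u ⬝ᵥ x ∧ 0 ≤ u ⬝ᵥ y} :=
  (measurableSet_le measurable_const (continuous_id.dotProduct continuous_const).measurable).inter
    (measurableSet_le measurable_const (continuous_id.dotProduct continuous_const).measurable)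

noncomputable def ntkGram (μ : Measure (ι → ℝ)) (x : κ → ι → ℝ) : Matrix κ κ ℝ :=
  Matrix.of fun i j => (x i ⬝ᵥ x j) * (μ {w | 0 ≤ w ⬝ᵥ x i ∧ 0 ≤ w ⬝ᵥ x j}).toReal

theorem isHermitian_ntkGram (μ : Measure (ι → ℝ)) (x : κ → ι → ℝ) : (ntkGram μ x).IsHermitian := by
  ext i j
  simp only [conjTranspose_apply, star_trivial, ntkGram, of_apply, dotProduct_comm (x j), and_comm]

theorem integral_ntkFeature_dotProduct_ntkFeature (μ : Measure (ι → ℝ)) (x y : ι → ℝ) :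
    ∫ w, ntkFeature x w ⬝ᵥ ntkFeature y w ∂μ =
      (x ⬝ᵥ y) * (μ {u | 0 ≤ u ⬝ᵥ x ∧ 0 ≤ u ⬝ᵥ y}).toReal := by
  simp_rw [ntkFeature_dotProduct_ntkFeature]
  rw [integral_indicator_const _ (measurableSet_setOf_dotProduct_nonneg x y), smul_eq_mul,
    mul_comm, measureReal_def]

theorem sum_smul_ntkFeature_dotProduct_self [Fintype κ] (x : κ → ι → ℝ) (v : κ → ℝ) (w : ι → ℝ) :
    (∑ i, v i • ntkFeature (x i) w) ⬝ᵥ (∑ j, v j • ntkFeature (x j) w) =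
      ∑ i, ∑ j, v i * v j * (ntkFeature (x i) w ⬝ᵥ ntkFeature (x j) w) := by
  simp_rw [sum_dotProduct, dotProduct_sum, smul_dotProduct, dotProduct_smul, smul_eq_mul, mul_assoc]

variable (μ : Measure (ι → ℝ)) [IsFiniteMeasure μ] [Fintype κ]

theorem integrable_ntkFeature_dotProduct_ntkFeature (x y : ι → ℝ) :
    Integrable (fun w => ntkFeature x w ⬝ᵥ ntkFeature y w) μ := by
  simp_rw [ntkFeature_dotProduct_ntkFeature]
  exact (integrable_const _).indicator (measurableSet_setOf_dotProduct_nonneg x y)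

theorem integrable_sum_smul_ntkFeature_dotProduct_self (x : κ → ι → ℝ) (v : κ → ℝ) :
    Integrable (fun w => (∑ i, v i • ntkFeature (x i) w) ⬝ᵥ (∑ j, v j • ntkFeature (x j) w)) μ := by
  simp_rw [sum_smul_ntkFeature_dotProduct_self]
  exact integrable_finsetSum _ fun i _ => integrable_finsetSum _ fun j _ =>
    (integrable_ntkFeature_dotProduct_ntkFeature μ _ _).const_mul _

theorem dotProduct_ntkGram_mulVec (x : κ → ι → ℝ) (v : κ → ℝ) :
    v ⬝ᵥ (ntkGram μ x *ᵥ v) =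
      ∫ w, (∑ i, v i • ntkFeature (x i) w) ⬝ᵥ (∑ j, v j • ntkFeature (x j) w) ∂μ := by
  simp_rw [sum_smul_ntkFeature_dotProduct_self]
  rw [integral_finsetSum _ fun i _ => integrable_finsetSum _ fun j _ =>
    (integrable_ntkFeature_dotProduct_ntkFeature μ _ _).const_mul _]
  simp_rw [integral_finsetSum _ fun j _ =>
    (integrable_ntkFeature_dotProduct_ntkFeature μ _ _).const_mul _, integral_const_mul,
    integral_ntkFeature_dotProduct_ntkFeature]
  simp only [dotProduct, mulVec, ntkGram, of_apply, mul_sum]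
  exact sum_congr rfl fun i _ => sum_congr rfl fun j _ => by ring

theorem posDef_ntkGram [μ.IsOpenPosMeasure] {x : κ → ι → ℝ} (hx : ∀ i, x i ≠ 0)
    (hpar : Pairwise fun i j => ∀ c : ℝ, x j ≠ c • x i) : (ntkGram μ x).PosDef := by
  refine posDef_iff_dotProduct_mulVec.2 ⟨isHermitian_ntkGram μ x, fun v hv => ?_⟩
  rw [star_trivial, dotProduct_ntkGram_mulVec]
  set S := fun w => ∑ i, v i • ntkFeature (x i) w
  have hnonneg : ∀ w, 0 ≤ S w ⬝ᵥ S w := fun w => by simpa using dotProduct_star_self_nonneg (S w)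
  refine (integral_nonneg hnonneg).lt_of_ne fun hzero => hv ?_
  have hae : ∀ᵐ w ∂μ, S w = 0 := by
    filter_upwards [(integral_eq_zero_iff_of_nonneg hnonneg
      (integrable_sum_smul_ntkFeature_dotProduct_self μ x v)).1 hzero.symm] with w hw
    exact dotProduct_self_eq_zero.1 hw
  funext i
  obtain ⟨w, hwi, hw⟩ := exists_dotProduct_eq_zero_and_forall_ne_zero
    (y := fun j : {j // j ≠ i} => x j) fun j => hpar (Ne.symm j.2)
  exact eq_zero_of_dense_setOf_sum_smul_ntkFeature_eq_zero (hx i) hwi (fun j hj => hw ⟨j, hj⟩)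
    (μ.dense_of_ae hae)

theorem ntk_gram_posdef_general
    (d n : ℕ)
    (x : Fin n → (Fin d → ℝ))
    (hunit : ∀ i, x i ⬝ᵥ x i = 1)
    (hnotpar : ∀ i j, i ≠ j → x i ≠ x j ∧ x i ≠ -x j) :
    Matrix.PosDef (Matrix.of fun i j : Fin n =>
      (x i ⬝ᵥ x j) *
        ((Measure.pi fun _ : Fin d => ProbabilityTheory.gaussianReal 0 1)
          {w : Fin d → ℝ | 0 ≤ w ⬝ᵥ x i ∧ 0 ≤ w ⬝ᵥ x j}).toReal) := by
  have := ProbabilityTheory.isOpenPosMeasure_gaussianReal 0 one_ne_zero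
  refine posDef_ntkGram _ (fun i h0 => by simpa [h0] using hunit i) fun i j hij => ?_
  exact ne_smul_of_dotProduct_self_eq_one (hunit i) (hunit j) (hnotpar i j hij).1
    (hnotpar i j hij).2

theorem ntk_gram_posdef
    (d n : ℕ) (hd : 0 < d) (hn : 0 < n)
    (x : Fin n → (Fin d → ℝ))
    (hunit : ∀ i, x i ⬝ᵥ x i = 1)
    (hnotpar : ∀ i j, i ≠ j → x i ≠ x j ∧ x i ≠ -x j) :
    Matrix.PosDef (Matrix.of fun i j : Fin n =>
      (x i ⬝ᵥ x j) *
        ((Measure.pi fun _ : Fin d => ProbabilityTheory.gaussianReal 0 1)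
          {w : Fin d → ℝ | 0 ≤ w ⬝ᵥ x i ∧ 0 ≤ w ⬝ᵥ x j}).toReal) :=
  ntk_gram_posdef_general d n x hunit hnotpar
end
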